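/- arXiv:2506.09723 — 8 statements merged into one kernel-verified Lean document; each statement's English description precedes it below -/
import Mathlib

section
/- Let (g_n) be a sequence in SL(2,ℝ) and (v_n) a sequence in ℝ² such that (v_n) does not converge to 0. Suppose g_n → g in SL(2,ℝ) and v_n − g_n·v_n → 0 in ℝ². Then g is unipotent, i.e. (g − I)² = 0 (equivalently, det(I − g) = 0 and hence trace(g) = 2). -/
open Filter Topology

/-- `SL(2,ℝ)`. -/
abbrev SL2 := Matrix.SpecialLinearGroup (Fin 2) ℝ

/-- The topology on `SL(2,ℝ)` induced from the space of `2×2` real matrices. -/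
instance : TopologicalSpace SL2 :=
  TopologicalSpace.induced ((↑) : SL2 → Matrix (Fin 2) (Fin 2) ℝ) inferInstance

/-! If `det (1 - g) ≠ 0`, then `1 - g` stays invertible near `g` with a continuous inverse, so
`v_n = (1 - g_n)⁻¹ (v_n - g_n v_n) → 0`. Hence `1 - g` is singular; for `det g = 1` this forces
`trace g = 2`, and Cayley–Hamilton gives `(g - 1)² = 0`. -/

namespace Matrix

theorem trace_eq_two_of_det_one_sub_eq_zero {R : Type*} [CommRing R]
    {A : Matrix (Fin 2) (Fin 2) R} (hA : A.det = 1) (h : (1 - A).det = 0) : A.trace = 2 := by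
  rw [det_fin_two] at h hA
  simp only [sub_apply, one_apply_eq, one_apply_ne zero_ne_one, one_apply_ne one_ne_zero] at h
  rw [trace_fin_two]
  linear_combination hA - h

theorem sub_one_sq_eq_zero_of_det_one_sub_eq_zero {R : Type*} [CommRing R]
    {A : Matrix (Fin 2) (Fin 2) R} (hA : A.det = 1) (h : (1 - A).det = 0) : (A - 1) ^ 2 = 0 := by
  have htr := trace_eq_two_of_det_one_sub_eq_zero hA h
  rw [trace_fin_two] at htr
  rw [det_fin_two] at hA
  ext i j
  fin_cases i <;> fin_cases j <;>
    simp only [Fin.zero_eta, Fin.mk_one, Fin.isValue, sq, mul_apply, sub_apply, one_apply,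
      Fin.sum_univ_two, ↓reduceIte, zero_ne_one, one_ne_zero, sub_zero, zero_apply]
  · linear_combination A 0 0 * htr - hA
  · linear_combination A 0 1 * htr
  · linear_combination A 1 0 * htr
  · linear_combination A 1 1 * htr - hA

theorem tendsto_of_tendsto_mulVec {ι n K : Type*} [Fintype n] [DecidableEq n] [Field K]
    [TopologicalSpace K] [IsTopologicalDivisionRing K] [T1Space K] {l : Filter ι}
    {M : ι → Matrix n n K} {A : Matrix n n K} {v : ι → n → K} {w : n → K}
    (hM : Tendsto M l (𝓝 A)) (hA : A.det ≠ 0)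
    (hv : Tendsto (fun i => M i *ᵥ v i) l (𝓝 w)) :
    Tendsto v l (𝓝 (A⁻¹ *ᵥ w)) := by
  have hinv : Tendsto (fun i => (M i)⁻¹) l (𝓝 A⁻¹) := by
    refine (continuousAt_matrix_inv A ?_).tendsto.comp hM
    simpa only [Ring.inverse_eq_inv'] using continuousAt_inv₀ hA
  have hdet : ∀ᶠ i in l, (M i).det ≠ 0 :=
    ((continuous_id.matrix_det.tendsto A).comp hM).eventually_ne hA
  refine ((continuous_fst.matrix_mulVec continuous_snd).tendsto _ |>.comp
    (hinv.prodMk_nhds hv)).congr' ?_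
  filter_upwards [hdet] with i hi
  simp [mulVec_mulVec, nonsing_inv_mul _ (isUnit_iff_ne_zero.2 hi)]

end Matrix

/-- If `(g_n)` is a sequence in `SL(2,ℝ)` and `(v_n)` a sequence in `ℝ²` not converging to `0`
such that `g_n → g` and `v_n − g_n·v_n → 0`, then `g` is unipotent: `(g − I)² = 0`. -/
theorem stmt_0 (g : ℕ → SL2) (v : ℕ → (Fin 2 → ℝ)) (glim : SL2)
    (hv : ¬ Tendsto v atTop (𝓝 0))
    (hg : Tendsto g atTop (𝓝 glim))
    (hvg : Tendsto (fun n => v n - ((g n : Matrix (Fin 2) (Fin 2) ℝ)).mulVec (v n))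
      atTop (𝓝 0)) :
    ((glim : Matrix (Fin 2) (Fin 2) ℝ) - 1) ^ 2 = 0 := by
  have hg' : Tendsto (fun n => (g n : Matrix (Fin 2) (Fin 2) ℝ)) atTop (𝓝 glim) :=
    (continuous_induced_dom.tendsto _).comp hg
  have hsingular : (1 - (glim : Matrix (Fin 2) (Fin 2) ℝ)).det = 0 := by
    by_contra hdet
    apply hv
    have := Matrix.tendsto_of_tendsto_mulVec (tendsto_const_nhds.sub hg') hdet
      (by simpa only [Matrix.sub_mulVec, Matrix.one_mulVec] using hvg)
    rwa [Matrix.mulVec_zero] at this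
  exact Matrix.sub_one_sq_eq_zero_of_det_one_sub_eq_zero glim.det_coe hsingular
end

section
/- Let (H_n) and H be closed subgroups of GL(d,ℝ) such that H_n converges to H in the Chabauty sense: (i) for every h ∈ H there exist h_n ∈ H_n with h_n → h, and (ii) for every strictly increasing sequence (k_n) and every x_n ∈ H_{k_n} with x_n → x, one has x ∈ H. Let 𝔥_n and 𝔥 be ℝ-linear subspaces of the d×d real matrices whose underlying sets are {X : ∀ t ∈ ℝ, exp(tX) ∈ H_n} and {X : ∀ t ∈ ℝ, exp(tX) ∈ H} respectively, and assume dim 𝔥_n = dim 𝔥 for all n. Then 𝔥_n converges to 𝔥 in the same Chabauty sense as subsets of the space of d×d real matrices. -/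
/-!
Membership in the Lie algebra of a subgroup is membership of `exp (t • X)` for every `t`, and
`X ↦ exp (t • X)` is continuous, so limits of elements of `𝔥_{k n}` lie in `𝔥`: this is the
second Chabauty condition for the `𝔥_n`. For the first, fix orthonormal bases of the `𝔥_n`
(after choosing any inner product). Along any subsequence, a further subsequence of these bases
converges to an orthonormal family of `dim 𝔥` vectors of `𝔥`, that is, to a basis of `𝔥`, so
every element of `𝔥` is a limit of the corresponding combinations in the `𝔥_n`.
-/

open Filter Topology

/-- Chabauty convergence of a sequence of subsets of a topological space. -/
def ChabautyTendsto {X : Type*} [TopologicalSpace X] (S : ℕ → Set X) (T : Set X) : Prop :=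
  (∀ h ∈ T, ∃ u : ℕ → X, (∀ n, u n ∈ S n) ∧ Tendsto u atTop (𝓝 h)) ∧
  (∀ k : ℕ → ℕ, StrictMono k → ∀ u : ℕ → X, (∀ n, u n ∈ S (k n)) →
    ∀ x : X, Tendsto u atTop (𝓝 x) → x ∈ T)

open Module Metric NormedSpace

theorem Metric.exists_tendsto_of_tendsto_infDist {X : Type*} [PseudoMetricSpace X]
    {S : ℕ → Set X} {x : X} (hne : ∀ n, (S n).Nonempty)
    (hS : Tendsto (fun n => infDist x (S n)) atTop (𝓝 0)) :
    ∃ u : ℕ → X, (∀ n, u n ∈ S n) ∧ Tendsto u atTop (𝓝 x) := by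
  choose u hu hux using fun n : ℕ => (infDist_lt_iff (hne n)).mp
    (lt_add_of_pos_right (infDist x (S n)) (Nat.one_div_pos_of_nat (n := n)))
  refine ⟨u, hu, tendsto_iff_dist_tendsto_zero.mpr ?_⟩
  refine squeeze_zero (fun n => dist_nonneg) (fun n => (dist_comm (u n) x).trans_le (hux n).le) ?_
  simpa using hS.add tendsto_one_div_add_atTop_nhds_zero_nat

section InnerProductSpace

variable {E : Type*} [NormedAddCommGroup E] [InnerProductSpace ℝ E]

theorem Orthonormal.of_tendsto {ι α : Type*} {l : Filter α} [l.NeBot] {b : α → ι → E}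
    {c : ι → E} (hb : ∀ a, Orthonormal ℝ (b a)) (hc : ∀ i, Tendsto (b · i) l (𝓝 (c i))) :
    Orthonormal ℝ c := by
  classical
  refine orthonormal_iff_ite.mpr fun i j => tendsto_nhds_unique ((hc i).inner (hc j)) ?_
  simp only [orthonormal_iff_ite.mp (hb _)]
  exact tendsto_const_nhds

theorem Submodule.exists_orthonormal_of_finrank_eq [FiniteDimensional ℝ E] (p : Submodule ℝ E)
    {r : ℕ} (hr : finrank ℝ p = r) : ∃ b : Fin r → E, (∀ i, b i ∈ p) ∧ Orthonormal ℝ b := by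
  let B := (stdOrthonormalBasis ℝ p).reindex (finCongr hr)
  exact ⟨fun i => B i, fun i => (B i).2, B.orthonormal.comp_linearIsometry p.subtypeₗᵢ⟩

variable [FiniteDimensional ℝ E] {S : ℕ → Submodule ℝ E} {T : Submodule ℝ E}

theorem exists_strictMono_tendsto_mem_of_finrank_eq (hS : ∀ n, finrank ℝ (S n) = finrank ℝ T)
    (hT : ∀ k : ℕ → ℕ, StrictMono k → ∀ u : ℕ → E, (∀ n, u n ∈ S (k n)) →
      ∀ x : E, Tendsto u atTop (𝓝 x) → x ∈ T)
    {x : E} (hx : x ∈ T) :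
    ∃ φ : ℕ → ℕ, StrictMono φ ∧ ∃ w : ℕ → E, (∀ n, w n ∈ S (φ n)) ∧ Tendsto w atTop (𝓝 x) := by
  choose b hbS hb using fun n => (S n).exists_orthonormal_of_finrank_eq (hS n)
  have hbounded : ∀ n, b n ∈ Set.univ.pi fun _ => closedBall (0 : E) 1 := fun n i _ =>
    mem_closedBall_zero_iff.mpr ((hb n).1 i).le
  obtain ⟨c, -, φ, hφ, hbc⟩ :=
    (isCompact_univ_pi fun _ => isCompact_closedBall (0 : E) 1).tendsto_subseq hbounded
  have hbc' : ∀ i, Tendsto (fun n => b (φ n) i) atTop (𝓝 (c i)) := tendsto_pi_nhds.mp hbc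
  have hc : Orthonormal ℝ c := Orthonormal.of_tendsto (fun n => hb (φ n)) hbc'
  -- `c` is an orthonormal family of `finrank T` limit vectors in `T`, hence spans `T`
  have hspan : Submodule.span ℝ (Set.range c) = T := by
    refine Submodule.eq_of_le_of_finrank_eq ?_ ?_
    · exact Submodule.span_le.mpr <| Set.range_subset_iff.mpr fun i =>
        hT φ hφ _ (fun n => hbS (φ n) i) _ (hbc' i)
    · rw [finrank_span_eq_card hc.linearIndependent, Fintype.card_fin]
  obtain ⟨a, rfl⟩ := (Submodule.mem_span_range_iff_exists_fun ℝ).mp (hspan ▸ hx)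
  exact ⟨φ, hφ, fun n => ∑ i, a i • b (φ n) i,
    fun n => Submodule.sum_mem _ fun i _ => Submodule.smul_mem _ _ (hbS (φ n) i),
    tendsto_finsetSum _ fun i _ => (hbc' i).const_smul (a i)⟩

theorem tendsto_infDist_of_finrank_eq (hS : ∀ n, finrank ℝ (S n) = finrank ℝ T)
    (hT : ∀ k : ℕ → ℕ, StrictMono k → ∀ u : ℕ → E, (∀ n, u n ∈ S (k n)) →
      ∀ x : E, Tendsto u atTop (𝓝 x) → x ∈ T)
    {x : E} (hx : x ∈ T) :
    Tendsto (fun n => infDist x (S n : Set E)) atTop (𝓝 0) := by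
  refine tendsto_of_subseq_tendsto fun ns hns => ?_
  obtain ⟨ψ, -, hψ⟩ := strictMono_subseq_of_tendsto_atTop hns
  obtain ⟨φ, -, w, hw, hwx⟩ := exists_strictMono_tendsto_mem_of_finrank_eq (S := S ∘ ns ∘ ψ)
    (fun n => hS _) (fun k hk => hT _ (hψ.comp hk)) hx
  refine ⟨ψ ∘ φ, squeeze_zero (fun n => infDist_nonneg)
    (fun n => infDist_le_dist_of_mem (hw n)) ?_⟩
  simpa using (tendsto_const_nhds (x := x)).dist hwx

end InnerProductSpace

theorem chabautyTendsto_of_finrank_eq {E : Type*} [AddCommGroup E] [Module ℝ E]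
    [TopologicalSpace E] [IsTopologicalAddGroup E] [ContinuousSMul ℝ E] [T2Space E]
    [FiniteDimensional ℝ E] {S : ℕ → Submodule ℝ E} {T : Submodule ℝ E}
    (hS : ∀ n, finrank ℝ (S n) = finrank ℝ T)
    (hT : ∀ k : ℕ → ℕ, StrictMono k → ∀ u : ℕ → E, (∀ n, u n ∈ S (k n)) →
      ∀ x : E, Tendsto u atTop (𝓝 x) → x ∈ T) :
    ChabautyTendsto (fun n => (S n : Set E)) T := by
  refine ⟨fun x hx => ?_, hT⟩
  -- transport to a Euclidean space, where orthonormal bases are available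
  let e : E ≃L[ℝ] EuclideanSpace ℝ (Fin (finrank ℝ E)) :=
    .ofFinrankEq finrank_euclideanSpace_fin.symm
  let S' n := (S n).map e.toLinearEquiv.toLinearMap
  let T' := T.map e.toLinearEquiv.toLinearMap
  have hT' : ∀ k : ℕ → ℕ, StrictMono k → ∀ u, (∀ n, u n ∈ S' (k n)) →
      ∀ y, Tendsto u atTop (𝓝 y) → y ∈ T' := fun k hk u hu y hy =>
    (Submodule.mem_map_equiv _).mpr <|
      hT k hk _ (fun n => (Submodule.mem_map_equiv _).mp (hu n)) _
        ((e.symm.continuous.tendsto y).comp hy)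
  obtain ⟨u, hu, hux⟩ := exists_tendsto_of_tendsto_infDist (fun n => ⟨0, (S' n).zero_mem⟩)
    (tendsto_infDist_of_finrank_eq (S := S') (T := T')
      (fun n => by simp only [S', T', LinearEquiv.finrank_map_eq, hS n]) hT'
      (Submodule.mem_map_of_mem hx))
  refine ⟨fun n => e.symm (u n), fun n => (Submodule.mem_map_equiv _).mp (hu n), ?_⟩
  simpa [Function.comp_def] using (e.symm.continuous.tendsto _).comp hux

namespace Matrix

variable {m : Type*} [Fintype m] [DecidableEq m]

theorem continuous_exp : Continuous (exp : Matrix m m ℝ → Matrix m m ℝ) :=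
  open scoped Norms.Operator in exp_continuous

noncomputable def expUnit (A : Matrix m m ℝ) : GL m ℝ :=
  (isUnit_exp A).unit

@[simp]
theorem coe_expUnit (A : Matrix m m ℝ) : (expUnit A : Matrix m m ℝ) = exp A :=
  (isUnit_exp A).unit_spec

theorem continuous_expUnit : Continuous (expUnit : Matrix m m ℝ → GL m ℝ) := by
  refine Units.continuous_iff.mpr ⟨?_, ?_⟩
  · simpa [Function.comp_def] using continuous_exp
  · simpa [coe_units_inv, ← exp_neg, Function.comp_def] using
      (continuous_exp (m := m)).comp continuous_neg

theorem exists_mem_coe_eq_exp_iff {G : Set (GL m ℝ)} {A : Matrix m m ℝ} :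
    (∃ u ∈ G, (u : Matrix m m ℝ) = exp A) ↔ expUnit A ∈ G :=
  ⟨fun ⟨u, hu, huA⟩ => by rwa [← Units.ext (huA.trans (coe_expUnit A).symm)],
    fun h => ⟨_, h, coe_expUnit A⟩⟩

theorem expUnit_smul_mem_of_tendsto {α : Type*} {l : Filter α} {G : α → Set (GL m ℝ)}
    {G' : Set (GL m ℝ)}
    (hG : ∀ g : α → GL m ℝ, (∀ a, g a ∈ G a) → ∀ x, Tendsto g l (𝓝 x) → x ∈ G')
    {X : α → Matrix m m ℝ} (hX : ∀ a (t : ℝ), expUnit (t • X a) ∈ G a) {Y : Matrix m m ℝ}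
    (hY : Tendsto X l (𝓝 Y)) (t : ℝ) : expUnit (t • Y) ∈ G' :=
  hG _ (fun a => hX a t) _ ((continuous_expUnit.tendsto _).comp (hY.const_smul t))

end Matrix

theorem stmt_4_general (d : ℕ)
    (H : ℕ → Subgroup (Matrix.GeneralLinearGroup (Fin d) ℝ))
    (Hlim : Subgroup (Matrix.GeneralLinearGroup (Fin d) ℝ))
    (hconv : ChabautyTendsto (fun n => (H n : Set (Matrix.GeneralLinearGroup (Fin d) ℝ)))
      (Hlim : Set (Matrix.GeneralLinearGroup (Fin d) ℝ)))
    (h : ℕ → Submodule ℝ (Matrix (Fin d) (Fin d) ℝ))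
    (hlim : Submodule ℝ (Matrix (Fin d) (Fin d) ℝ))
    (hh : ∀ n, (h n : Set (Matrix (Fin d) (Fin d) ℝ)) =
      {X | ∀ t : ℝ, ∃ u ∈ H n, (u : Matrix (Fin d) (Fin d) ℝ) = NormedSpace.exp (t • X)})
    (hhlim : (hlim : Set (Matrix (Fin d) (Fin d) ℝ)) =
      {X | ∀ t : ℝ, ∃ u ∈ Hlim, (u : Matrix (Fin d) (Fin d) ℝ) = NormedSpace.exp (t • X)})
    (hdim : ∀ n, Module.finrank ℝ (h n) = Module.finrank ℝ hlim) :
    ChabautyTendsto (fun n => (h n : Set (Matrix (Fin d) (Fin d) ℝ)))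
      (hlim : Set (Matrix (Fin d) (Fin d) ℝ)) := by
  refine chabautyTendsto_of_finrank_eq hdim fun k hk X hX Y hY => ?_
  simp only [← SetLike.mem_coe, hh, hhlim, Set.mem_ofPred_eq, Matrix.exists_mem_coe_eq_exp_iff]
    at hX ⊢
  exact Matrix.expUnit_smul_mem_of_tendsto (hconv.2 k hk) hX hY

/-- If closed subgroups `H_n` of `GL(d,ℝ)` converge to a closed subgroup `H` in the Chabauty
sense, and their Lie algebras `𝔥_n = {X : ∀ t, exp(tX) ∈ H_n}` all have the same dimension as
the Lie algebra `𝔥` of `H`, then `𝔥_n → 𝔥` in the Chabauty sense in the d×d matrices. -/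
theorem stmt_4 (d : ℕ)
    (H : ℕ → Subgroup (Matrix.GeneralLinearGroup (Fin d) ℝ))
    (Hlim : Subgroup (Matrix.GeneralLinearGroup (Fin d) ℝ))
    (hHcl : ∀ n, IsClosed ((H n : Set (Matrix.GeneralLinearGroup (Fin d) ℝ))))
    (hHlimcl : IsClosed ((Hlim : Set (Matrix.GeneralLinearGroup (Fin d) ℝ))))
    (hconv : ChabautyTendsto (fun n => (H n : Set (Matrix.GeneralLinearGroup (Fin d) ℝ)))
      (Hlim : Set (Matrix.GeneralLinearGroup (Fin d) ℝ)))
    (h : ℕ → Submodule ℝ (Matrix (Fin d) (Fin d) ℝ))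
    (hlim : Submodule ℝ (Matrix (Fin d) (Fin d) ℝ))
    (hh : ∀ n, (h n : Set (Matrix (Fin d) (Fin d) ℝ)) =
      {X | ∀ t : ℝ, ∃ u ∈ H n, (u : Matrix (Fin d) (Fin d) ℝ) = NormedSpace.exp (t • X)})
    (hhlim : (hlim : Set (Matrix (Fin d) (Fin d) ℝ)) =
      {X | ∀ t : ℝ, ∃ u ∈ Hlim, (u : Matrix (Fin d) (Fin d) ℝ) = NormedSpace.exp (t • X)})
    (hdim : ∀ n, Module.finrank ℝ (h n) = Module.finrank ℝ hlim) :
    ChabautyTendsto (fun n => (h n : Set (Matrix (Fin d) (Fin d) ℝ)))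
      (hlim : Set (Matrix (Fin d) (Fin d) ℝ)) :=
  stmt_4_general d H Hlim hconv h hlim hh hhlim hdim
end

section
/- Let L = SL(2,ℝ) × {0} ⊆ G and let (x_n) be a sequence in G such that the conjugates x_n L x_n⁻¹ converge in the Chabauty sense to a closed subgroup H of G. Then there exists x ∈ G such that either H = x L x⁻¹, or H = x (N⁺ ⋉ ℝ²) x⁻¹, where N⁺ ⋉ ℝ² = {((1, s; 0, 1), v) : s ∈ ℝ, v ∈ ℝ²}. -/
open Filter Topology

noncomputable section

/-- The underlying type of the group `G = SL(2,ℝ) ⋉ ℝ²`, with the product topology. -/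
abbrev GG := SL2 × (Fin 2 → ℝ)

/-- Multiplication in `G`: `(g,v)(g',v') = (gg', v + g·v')`. -/
def gmul (x y : GG) : GG := (x.1 * y.1, x.2 + (x.1 : Matrix (Fin 2) (Fin 2) ℝ).mulVec y.2)

/-- The identity element of `G`. -/
def gone : GG := (1, 0)

/-- Inversion in `G`. -/
def ginv (x : GG) : GG := (x.1⁻¹, -((x.1⁻¹ : SL2) : Matrix (Fin 2) (Fin 2) ℝ).mulVec x.2)

/-- The conjugate `x H x⁻¹` of a subset `H ⊆ G` by `x ∈ G`. -/
def conjSet (x : GG) (H : Set GG) : Set GG := (fun h => gmul (gmul x h) (ginv x)) '' H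

/-- `H` is a closed subgroup of `G`. -/
def IsClosedSubgroup (H : Set GG) : Prop :=
  IsClosed H ∧ gone ∈ H ∧ (∀ a ∈ H, ∀ b ∈ H, gmul a b ∈ H) ∧ (∀ a ∈ H, ginv a ∈ H)

/-- The Levi subgroup `L = SL(2,ℝ) × {0}`. -/
def Lset : Set GG := {x | x.2 = 0}

/-- The subgroup `N⁺ ⋉ ℝ² = {((1,s;0,1), v) : s ∈ ℝ, v ∈ ℝ²}`. -/
def NplusR2 : Set GG := {x | ∃ s : ℝ, (x.1 : Matrix (Fin 2) (Fin 2) ℝ) = !![1, s; 0, 1]}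

/-- The maximal compact subgroup `K = SO(2,ℝ) × {0}`. -/
def Kset : Set GG :=
  {x | ∃ θ : ℝ, (x.1 : Matrix (Fin 2) (Fin 2) ℝ) =
      !![Real.cos θ, Real.sin θ; -Real.sin θ, Real.cos θ] ∧ x.2 = 0}

/-- `V_c = {(I,(t,ct)) : t ∈ ℝ}`. -/
def Vc (c : ℝ) : Set GG := {x | ∃ t : ℝ, x.1 = 1 ∧ x.2 = ![t, c * t]}

/-- `V_∞ = {(I,(0,t)) : t ∈ ℝ}`. -/
def Vinf : Set GG := {x | ∃ t : ℝ, x.1 = 1 ∧ x.2 = ![0, t]}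

/-- `Ñ⁺ = {(±(1,s;0,1), 0) : s ∈ ℝ}`. -/
def Ntilde : Set GG :=
  {x | (∃ s : ℝ, (x.1 : Matrix (Fin 2) (Fin 2) ℝ) = !![1, s; 0, 1] ∨
      (x.1 : Matrix (Fin 2) (Fin 2) ℝ) = -!![1, s; 0, 1]) ∧ x.2 = 0}

/-- The diagonal subgroup `A = {(diag(a,1/a), 0) : a > 0}`. -/
def Aset : Set GG :=
  {x | ∃ a : ℝ, 0 < a ∧ (x.1 : Matrix (Fin 2) (Fin 2) ℝ) = !![a, 0; 0, a⁻¹] ∧ x.2 = 0}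

/-- `V_{(a,b,c)} = {((1,at;0,1), (ct + abt²/2, bt)) : t ∈ ℝ}`. -/
def Vabc (a b c : ℝ) : Set GG :=
  {x | ∃ t : ℝ, (x.1 : Matrix (Fin 2) (Fin 2) ℝ) = !![1, a * t; 0, 1] ∧
      x.2 = ![c * t + a * b * t ^ 2 / 2, b * t]}

/-- The upper triangular Borel subgroup `B` of `SL(2,ℝ)`, inside `G`. -/
def Bset : Set GG :=
  {x | ∃ a s : ℝ, a ≠ 0 ∧ (x.1 : Matrix (Fin 2) (Fin 2) ℝ) = !![a, s; 0, a⁻¹] ∧ x.2 = 0}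

/-- `W = {((1,s;0,1), (t,0)) : s, t ∈ ℝ} = N⁺ ⋉ {(t,0)}`. -/
def Wset : Set GG :=
  {x | ∃ s t : ℝ, (x.1 : Matrix (Fin 2) (Fin 2) ℝ) = !![1, s; 0, 1] ∧ x.2 = ![t, 0]}

/-- The Borel subgroup `P = B ⋉ ℝ²` of `G`. -/
def Pset : Set GG :=
  {x | ∃ a s : ℝ, a ≠ 0 ∧ (x.1 : Matrix (Fin 2) (Fin 2) ℝ) = !![a, s; 0, a⁻¹]}

/-- The translation subgroup `ℝ² = {(I,v) : v ∈ ℝ²}`. -/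
def R2set : Set GG := {x | x.1 = 1}

/-- The unipotent subgroup `N⁺ = {((1,s;0,1), 0) : s ∈ ℝ}`. -/
def Nplus : Set GG := {x | ∃ s : ℝ, (x.1 : Matrix (Fin 2) (Fin 2) ℝ) = !![1, s; 0, 1] ∧ x.2 = 0}

/-- `V₀ = {(I,(t,0)) : t ∈ ℝ}`. -/
def V0 : Set GG := {x | ∃ t : ℝ, x.1 = 1 ∧ x.2 = ![t, 0]}

def upperUnipotent (s : ℝ) : SL2 :=
  ⟨!![1, s; 0, 1], by simp [Matrix.det_fin_two_of]⟩


/-!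
`G` acts linearly on `ℝ × ℝ² ≅ ℝ³` by `(g, v) • (c, w) = (c, g w + c v)`, and `x L x⁻¹` is the
stabilizer `stab (1, v)` of `x • (1, 0) = (1, v)`, where `v` is the translation part of `x`.
Stabilizers only depend on the line through a point, so the points `(1, vₙ)` may be normalised
onto the unit sphere and, after passing to a subsequence, converge to some `p ≠ 0`. Away from `0`
stabilizers depend continuously on the point in the Chabauty sense (the orbit map of `SL(2,ℝ)` on
`ℝ² ∖ 0` has continuous local sections), so `H = stab p`. If the first coordinate of `p` is
nonzero, `stab p` is a conjugate of `L`; otherwise `p = (0, k e₁)` for some `k ∈ SL(2,ℝ)` and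
`stab p` is the conjugate by `k` of `N⁺ ⋉ ℝ² = stab (0, e₁)`.
-/

open Matrix

namespace ChabautyTendsto

variable {X : Type*} [TopologicalSpace X] {S : ℕ → Set X} {T T' : Set X}

theorem of_eventually_mem (hS : ∀ n, (S n).Nonempty)
    (h₁ : ∀ x ∈ T, ∃ u : ℕ → X, (∀ᶠ n in atTop, u n ∈ S n) ∧ Tendsto u atTop (𝓝 x))
    (h₂ : ∀ k : ℕ → ℕ, StrictMono k → ∀ u : ℕ → X, (∀ n, u n ∈ S (k n)) →
      ∀ x : X, Tendsto u atTop (𝓝 x) → x ∈ T) :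
    ChabautyTendsto S T := by
  classical
  refine ⟨fun x hx => ?_, h₂⟩
  obtain ⟨u, hu, hux⟩ := h₁ x hx
  choose s hs using hS
  refine ⟨fun n => if u n ∈ S n then u n else s n, fun n => ?_, hux.congr' ?_⟩
  · dsimp only
    split_ifs with h
    exacts [h, hs n]
  · filter_upwards [hu] with n hn using (if_pos hn).symm

theorem comp_strictMono (h : ChabautyTendsto S T) {k : ℕ → ℕ} (hk : StrictMono k) :
    ChabautyTendsto (fun n => S (k n)) T := by
  refine ⟨fun x hx => ?_, fun k' hk' => h.2 (k ∘ k') (hk.comp hk')⟩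
  obtain ⟨u, hu, hux⟩ := h.1 x hx
  exact ⟨u ∘ k, fun n => hu (k n), hux.comp hk.tendsto_atTop⟩

theorem subset (h : ChabautyTendsto S T) (h' : ChabautyTendsto S T') : T ⊆ T' := fun x hx => by
  obtain ⟨u, hu, hux⟩ := h.1 x hx
  exact h'.2 id strictMono_id u hu x hux

theorem unique (h : ChabautyTendsto S T) (h' : ChabautyTendsto S T') : T = T' :=
  (h.subset h').antisymm (h'.subset h)

end ChabautyTendsto
namespace SL2

theorem isInducing_coe : Topology.IsInducing ((↑) : SL2 → Matrix (Fin 2) (Fin 2) ℝ) := ⟨rfl⟩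

theorem continuous_coe : Continuous ((↑) : SL2 → Matrix (Fin 2) (Fin 2) ℝ) :=
  isInducing_coe.continuous

instance : IsTopologicalGroup SL2 where
  continuous_mul := isInducing_coe.continuous_iff.2 <| by
    change Continuous fun p : SL2 × SL2 => (p.1 : Matrix (Fin 2) (Fin 2) ℝ) * p.2
    fun_prop
  continuous_inv := isInducing_coe.continuous_iff.2 <| by
    change Continuous fun g : SL2 => (g : Matrix (Fin 2) (Fin 2) ℝ).adjugate
    exact continuous_coe.matrix_adjugate

instance : ContinuousSMul SL2 (Fin 2 → ℝ) where
  continuous_smul := by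
    change Continuous fun p : SL2 × (Fin 2 → ℝ) => (p.1 : Matrix (Fin 2) (Fin 2) ℝ) *ᵥ p.2
    exact (continuous_coe.comp continuous_fst).matrix_mulVec continuous_snd

theorem coe_mulVec (g : SL2) (v : Fin 2 → ℝ) : (g : Matrix (Fin 2) (Fin 2) ℝ) *ᵥ v = g • v := rfl

end SL2

theorem gmul_def (x y : GG) : gmul x y = (x.1 * y.1, x.2 + x.1 • y.2) := rfl

theorem ginv_def (x : GG) : ginv x = (x.1⁻¹, -(x.1⁻¹ • x.2)) := rfl
def stab (p : ℝ × (Fin 2 → ℝ)) : Set GG := {x | x.1 • p.2 + p.1 • x.2 = p.2}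

theorem mem_stab {p : ℝ × (Fin 2 → ℝ)} {x : GG} : x ∈ stab p ↔ x.1 • p.2 + p.1 • x.2 = p.2 :=
  Iff.rfl

theorem stab_smul {t : ℝ} (ht : t ≠ 0) (p : ℝ × (Fin 2 → ℝ)) : stab (t • p) = stab p := by
  ext x
  simp only [mem_stab, Prod.smul_fst, Prod.smul_snd, smul_comm x.1 t, smul_assoc, ← smul_add]
  exact (smul_right_injective (Fin 2 → ℝ) ht).eq_iff

theorem gone_mem_stab (p : ℝ × (Fin 2 → ℝ)) : gone ∈ stab p := by
  simp [mem_stab, gone]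

theorem conjSet_Lset (x : GG) : conjSet x Lset = stab (1, x.2) := by
  ext y
  simp only [mem_stab, one_smul]
  constructor
  · rintro ⟨h, hh, rfl⟩
    simp only [Lset, Set.mem_ofPred_eq] at hh
    simp only [gmul_def, ginv_def, hh, smul_zero, add_zero, mul_smul, smul_neg]
    abel
  · intro hy
    have hconj : x.1 * (x.1⁻¹ * y.1 * x.1) = y.1 * x.1 := by group
    refine ⟨(x.1⁻¹ * y.1 * x.1, 0), rfl, Prod.ext ?_ ?_⟩ <;>
      simp only [gmul_def, ginv_def, hconj, mul_inv_cancel_right, smul_zero, add_zero, mul_smul,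
        smul_neg, smul_inv_smul]
    rw [eq_sub_of_add_eq' hy, sub_eq_add_neg]

theorem mem_NplusR2_iff {x : GG} : x ∈ NplusR2 ↔ x.1 • ![1, 0] = ![(1 : ℝ), 0] := by
  simp only [NplusR2, Set.mem_ofPred_eq, ← SL2.coe_mulVec]
  constructor
  · rintro ⟨s, hs⟩
    ext i
    fin_cases i <;> simp [hs]
  · intro h
    have h0 := congrFun h 0
    have h1 := congrFun h 1
    have hdet := x.1.2
    simp only [mulVec_fin_two, cons_val_zero, cons_val_one, cons_val_fin_one, mul_one, mul_zero,
      add_zero] at h0 h1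
    rw [Matrix.det_fin_two, h0, h1] at hdet
    refine ⟨x.1 0 1, ?_⟩
    ext i j
    fin_cases i <;> fin_cases j <;> simp [h0, h1]
    linarith
theorem conjSet_NplusR2 (k : SL2) : conjSet (k, 0) NplusR2 = stab (0, k • ![1, 0]) := by
  ext y
  simp only [mem_stab, zero_smul, add_zero]
  constructor
  · rintro ⟨h, hh, rfl⟩
    rw [mem_NplusR2_iff] at hh
    simp [gmul_def, ginv_def, mul_smul, hh]
  · intro hy
    refine ⟨(k⁻¹ * y.1 * k, k⁻¹ • y.2), ?_, Prod.ext ?_ ?_⟩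
    · simp [mem_NplusR2_iff, mul_smul, hy]
    · simp [gmul_def, ginv_def, mul_assoc]
    · simp [gmul_def, ginv_def]

theorem exists_continuousAt_smul_eq {a₀ : Fin 2 → ℝ} (ha₀ : a₀ ≠ 0) :
    ∃ k : (Fin 2 → ℝ) → SL2, ContinuousAt k a₀ ∧ ∀ᶠ a in 𝓝 a₀, k a • ![1, 0] = a := by
  classical
  set d : (Fin 2 → ℝ) → ℝ := fun a => a 0 * a₀ 0 + a 1 * a₀ 1
  -- columns `a` and `J a₀ / d a`, where `J` is the rotation by `π / 2` and `d a = det (a, J a₀)`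
  set F : (Fin 2 → ℝ) → Matrix (Fin 2) (Fin 2) ℝ :=
    fun a => if d a = 0 then 1 else !![a 0, -a₀ 1 / d a; a 1, a₀ 0 / d a] with hF
  have hdetF : ∀ a, (F a).det = 1 := fun a => by
    by_cases ha : d a = 0
    · simp [hF, ha]
    · simp only [hF, if_neg ha, Matrix.det_fin_two_of]
      field_simp
      ring
  have hd₀ : d a₀ ≠ 0 := fun h => ha₀ <| by
    ext i
    fin_cases i <;> simp <;> nlinarith [sq_nonneg (a₀ 0), sq_nonneg (a₀ 1)]
  have hdev : ∀ᶠ a in 𝓝 a₀, d a ≠ 0 :=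
    (show Continuous d by fun_prop).continuousAt.eventually_ne hd₀
  have hFev : ∀ᶠ a in 𝓝 a₀, F a = !![a 0, -a₀ 1 / d a; a 1, a₀ 0 / d a] := by
    filter_upwards [hdev] with a ha using if_neg ha
  refine ⟨fun a => ⟨F a, hdetF a⟩, SL2.isInducing_coe.continuousAt_iff.2 ?_, ?_⟩
  · refine ContinuousAt.congr ?_ (hFev.mono fun a ha => ha.symm)
    refine continuousAt_pi.2 fun i => continuousAt_pi.2 fun j => ?_
    fin_cases i <;> fin_cases j <;> simp <;>
      first | exact continuousAt_apply _ _ | fun_prop (disch := exact hd₀)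
  · filter_upwards [hFev] with a ha
    change F a *ᵥ ![1, 0] = a
    ext i
    fin_cases i <;> simp [ha]
theorem exists_tendsto_smul_eq {g : SL2} {a₀ : Fin 2 → ℝ} (ha₀ : a₀ ≠ 0)
    {a b : ℕ → Fin 2 → ℝ} (ha : Tendsto a atTop (𝓝 a₀)) (hb : Tendsto b atTop (𝓝 (g • a₀))) :
    ∃ h : ℕ → SL2, Tendsto h atTop (𝓝 g) ∧ ∀ᶠ n in atTop, h n • a n = b n := by
  obtain ⟨k, hkc, hk⟩ := exists_continuousAt_smul_eq ha₀
  obtain ⟨l, hlc, hl⟩ := exists_continuousAt_smul_eq ((smul_ne_zero_iff_ne g).2 ha₀)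
  set c := (l (g • a₀))⁻¹ * g * k a₀
  have hc : c • ![1, 0] = ![(1 : ℝ), 0] := by
    rw [mul_smul, mul_smul, hk.self_of_nhds, inv_smul_eq_iff, hl.self_of_nhds]
  refine ⟨fun n => l (b n) * c * (k (a n))⁻¹, ?_, ?_⟩
  · have := ((hlc.tendsto.comp hb).mul_const c).mul (hkc.tendsto.comp ha).inv
    simpa [c, mul_assoc] using this
  · filter_upwards [ha.eventually hk, hb.eventually hl] with n hkn hln
    rw [mul_smul, mul_smul, inv_smul_eq_iff.2 hkn.symm, hc, hln]
theorem isClosed_setOf_mem_stab : IsClosed {q : (ℝ × (Fin 2 → ℝ)) × GG | q.2 ∈ stab q.1} :=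
  isClosed_eq (by fun_prop) (by fun_prop)

theorem exists_tendsto_mem_stab {p : ℕ → ℝ × (Fin 2 → ℝ)} {p₀ : ℝ × (Fin 2 → ℝ)}
    (hp : Tendsto p atTop (𝓝 p₀)) (hp₀ : p₀ ≠ 0) {x : GG} (hx : x ∈ stab p₀) :
    ∃ u : ℕ → GG, (∀ᶠ n in atTop, u n ∈ stab (p n)) ∧ Tendsto u atTop (𝓝 x) := by
  have hc : Tendsto (fun n => (p n).1) atTop (𝓝 p₀.1) := (continuous_fst.tendsto _).comp hp
  have hw : Tendsto (fun n => (p n).2) atTop (𝓝 p₀.2) := (continuous_snd.tendsto _).comp hp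
  rw [mem_stab] at hx
  by_cases hc₀ : p₀.1 = 0
  · have hw₀ : p₀.2 ≠ 0 := fun h => hp₀ (Prod.ext hc₀ h)
    have hfix : x.1 • p₀.2 = p₀.2 := by simpa [hc₀] using hx
    have hb : Tendsto (fun n => (p n).2 - (p n).1 • x.2) atTop (𝓝 (x.1 • p₀.2)) := by
      simpa [hc₀, hfix] using hw.sub (hc.smul_const x.2)
    obtain ⟨h, hh, hev⟩ := exists_tendsto_smul_eq hw₀ hw hb
    refine ⟨fun n => (h n, x.2), hev.mono fun n hn => ?_, hh.prodMk_nhds tendsto_const_nhds⟩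
    rw [mem_stab, hn, sub_add_cancel]
  · refine ⟨fun n => (x.1, ((p n).1)⁻¹ • ((p n).2 - x.1 • (p n).2)),
      (hc.eventually_ne hc₀).mono fun n hn => ?_, tendsto_const_nhds.prodMk_nhds ?_⟩
    · rw [mem_stab, smul_inv_smul₀ hn, add_sub_cancel]
    · have hx₂ : x.2 = p₀.1⁻¹ • (p₀.2 - x.1 • p₀.2) := by
        rwa [eq_inv_smul_iff₀ hc₀, eq_sub_iff_add_eq']
      rw [hx₂]
      exact (hc.inv₀ hc₀).smul (hw.sub (hw.const_smul x.1))

theorem chabautyTendsto_stab {p : ℕ → ℝ × (Fin 2 → ℝ)} {p₀ : ℝ × (Fin 2 → ℝ)}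
    (hp : Tendsto p atTop (𝓝 p₀)) (hp₀ : p₀ ≠ 0) :
    ChabautyTendsto (fun n => stab (p n)) (stab p₀) :=
  .of_eventually_mem (fun _ => ⟨gone, gone_mem_stab _⟩)
    (fun _ hx => exists_tendsto_mem_stab hp hp₀ hx)
    fun _ hk _ hu _ hux => isClosed_setOf_mem_stab.mem_of_tendsto
      ((hp.comp hk.tendsto_atTop).prodMk_nhds hux) (Eventually.of_forall hu)
theorem exists_stab_eq_conjSet {p : ℝ × (Fin 2 → ℝ)} (hp : p ≠ 0) :
    ∃ y : GG, stab p = conjSet y Lset ∨ stab p = conjSet y NplusR2 := by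
  by_cases hc : p.1 = 0
  · have hw : p.2 ≠ 0 := fun h => hp (Prod.ext hc h)
    obtain ⟨k, -, hk⟩ := exists_continuousAt_smul_eq hw
    refine ⟨(k p.2, 0), Or.inr ?_⟩
    rw [conjSet_NplusR2, hk.self_of_nhds, ← hc]
  · refine ⟨(1, p.1⁻¹ • p.2), Or.inl ?_⟩
    rw [conjSet_Lset, ← stab_smul (inv_ne_zero hc) p]
    exact congrArg stab (Prod.ext (inv_mul_cancel₀ hc) rfl)

theorem stmt_5_general (x : ℕ → GG) (H : Set GG)
    (hconv : ChabautyTendsto (fun n => conjSet (x n) Lset) H) :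
    ∃ y : GG, H = conjSet y Lset ∨ H = conjSet y NplusR2 := by
  have hne : ∀ n, ((1 : ℝ), (x n).2) ≠ 0 := fun n h => one_ne_zero (congrArg Prod.fst h)
  set p : ℕ → ℝ × (Fin 2 → ℝ) := fun n => ‖((1 : ℝ), (x n).2)‖⁻¹ • (1, (x n).2)
  have hp : ∀ n, p n ∈ Metric.sphere 0 1 := fun n =>
    mem_sphere_zero_iff_norm.2 (norm_smul_inv_norm (hne n))
  have hS : ∀ n, conjSet (x n) Lset = stab (p n) := fun n => by
    rw [conjSet_Lset, stab_smul (inv_ne_zero (norm_ne_zero_iff.2 (hne n)))]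
  obtain ⟨p₀, hp₀, k, hk, hlim⟩ := (isCompact_sphere 0 1).tendsto_subseq hp
  have hp₀ne : p₀ ≠ 0 := fun h => by simp [h] at hp₀
  have hH : H = stab p₀ :=
    (hconv.comp_strictMono hk).unique <| by
      simpa only [hS, Function.comp_apply] using chabautyTendsto_stab hlim hp₀ne
  rw [hH]
  exact exists_stab_eq_conjSet hp₀ne

/-- Any Chabauty limit of conjugates of the Levi subgroup `L = SL(2,ℝ) × {0}` is either a
conjugate of `L` or a conjugate of `N⁺ ⋉ ℝ²`. -/
theorem stmt_5 (x : ℕ → GG) (H : Set GG) (hH : IsClosedSubgroup H)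
    (hconv : ChabautyTendsto (fun n => conjSet (x n) Lset) H) :
    ∃ y : GG, H = conjSet y Lset ∨ H = conjSet y NplusR2 :=
  stmt_5_general x H hconv

end
end

section
/- Let G be a connected finite-dimensional real Lie group and let K be a maximal compact subgroup of G, i.e. a compact subgroup such that every compact subgroup of G containing K equals K. If the quotient space G/K (with the quotient topology and the natural left G-action) carries a G-invariant Borel probability measure, then G is compact. -/
/-!
A connected locally compact group is σ-compact, being generated by any compact neighbourhood
`W` of `1`; hence so is `G/K`, and an invariant probability measure on `G/K` gives positive mass
to the open set `V`, the image of the interior of `W`. If `G` were not compact, one could choose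
`g₀, g₁, …` with the compact sets `gₙ W K` pairwise disjoint. The translates `gₙ V` would then be
infinitely many pairwise disjoint sets of the same positive measure, which is impossible in finite
total mass.
-/

open MeasureTheory Set Pointwise Function
open scoped ENNReal

theorem Subgroup.coe_closure_subset_iUnion_pow {G : Type*} [Group G] (s : Set G) :
    (Subgroup.closure s : Set G) ⊆ ⋃ n : ℕ, (s ∪ s⁻¹) ^ n := by
  intro x hx
  rw [SetLike.mem_coe, ← Subgroup.mem_toSubmonoid, Subgroup.closure_toSubmonoid] at hx
  induction hx using Submonoid.closure_induction with
  | mem x hx => exact mem_iUnion.2 ⟨1, by rwa [pow_one]⟩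
  | one => exact mem_iUnion.2 ⟨0, by rw [pow_zero]; rfl⟩
  | mul x y _ _ hx hy =>
    obtain ⟨m, hm⟩ := mem_iUnion.1 hx
    obtain ⟨n, hn⟩ := mem_iUnion.1 hy
    exact mem_iUnion.2 ⟨m + n, by rw [pow_add]; exact mul_mem_mul hm hn⟩

theorem IsCompact.pow {G : Type*} [Monoid G] [TopologicalSpace G] [ContinuousMul G] {s : Set G}
    (hs : IsCompact s) : ∀ n : ℕ, IsCompact (s ^ n)
  | 0 => by rw [pow_zero]; exact isCompact_singleton
  | n + 1 => by rw [pow_succ]; exact (hs.pow n).mul hs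

theorem IsTopologicalGroup.sigmaCompactSpace_of_connectedSpace (G : Type*) [Group G]
    [TopologicalSpace G] [IsTopologicalGroup G] [WeaklyLocallyCompactSpace G] [ConnectedSpace G] :
    SigmaCompactSpace G := by
  obtain ⟨W, hWc, hW1⟩ := exists_compact_mem_nhds (1 : G)
  have hopen : IsOpen (Subgroup.closure W : Set G) :=
    Subgroup.isOpen_of_mem_nhds _ (Filter.mem_of_superset hW1 Subgroup.subset_closure)
  have huniv : (Subgroup.closure W : Set G) = univ :=
    IsClopen.eq_univ ⟨Subgroup.isClosed_of_isOpen _ hopen, hopen⟩ ⟨1, one_mem _⟩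
  have hcover : ⋃ n : ℕ, (W ∪ W⁻¹) ^ n = univ :=
    eq_univ_of_univ_subset (huniv ▸ Subgroup.coe_closure_subset_iUnion_pow W)
  exact ⟨hcover ▸ isSigmaCompact_iUnion_of_isCompact _ fun n ↦ (hWc.union hWc.inv).pow n⟩

theorem QuotientGroup.image_mk_smul {G : Type*} [Group G] (N : Subgroup G) (c : G) (s : Set G) :
    ((↑) '' (c • s) : Set (G ⧸ N)) = c • (↑) '' s :=
  Function.Semiconj.set_image (f := ((↑) : G → G ⧸ N)) (fun _ ↦ rfl) s

theorem QuotientGroup.disjoint_image_mk {G : Type*} [Group G] {N : Subgroup G} {s t : Set G}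
    (h : Disjoint s (t * N)) : Disjoint ((↑) '' s : Set (G ⧸ N)) ((↑) '' t) := by
  rwa [disjoint_image_left, preimage_image_mk_eq_mul]

theorem Function.Surjective.sigmaCompactSpace {X Y : Type*} [TopologicalSpace X]
    [TopologicalSpace Y] [SigmaCompactSpace X] {f : X → Y} (hf : Surjective f) (hfc : Continuous f) :
    SigmaCompactSpace Y :=
  ⟨by simpa only [image_univ, hf.range_eq] using isSigmaCompact_univ.image hfc⟩

theorem measure_isOpen_pos_of_smulInvariant_of_sigmaCompactSpace (G : Type*) {α : Type*} [Group G]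
    [MulAction G α] [TopologicalSpace α] [MeasurableSpace α] [ContinuousConstSMul G α]
    [MulAction.IsMinimal G α] [SigmaCompactSpace α] {μ : Measure α} [SMulInvariantMeasure G α μ]
    (hμ : μ ≠ 0) {U : Set α} (hU : IsOpen U) (hne : U.Nonempty) : 0 < μ U := by
  obtain ⟨n, hn⟩ := exists_measure_pos_of_not_measure_iUnion_null (s := compactCovering α)
    (by rwa [iUnion_compactCovering, Measure.measure_univ_ne_zero])
  exact measure_isOpen_pos_of_smulInvariant_of_compact_ne_zero G (isCompact_compactCovering α n)
    hn.ne' hU hne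

theorem exists_seq_pairwise_disjoint_smul {G : Type*} [Group G] [TopologicalSpace G]
    [IsTopologicalGroup G] [NoncompactSpace G] {L : Set G} (hL : IsCompact L) :
    ∃ c : ℕ → G, Pairwise (Disjoint on fun n ↦ c n • L) := by
  obtain ⟨c, -, hc⟩ := exists_seq_of_forall_finset_exists (fun _ : G ↦ True)
    (fun x y ↦ Disjoint (x • L) (y • L)) fun s _ ↦ by
      obtain ⟨g, hg⟩ := exists_disjoint_smul_of_isCompact
        (s.isCompact_biUnion fun x _ ↦ hL.smul x) hL
      exact ⟨g, trivial, fun x hx ↦ hg.mono_left (subset_biUnion_of_mem (u := (· • L)) hx)⟩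
  exact ⟨c, (pairwise_disjoint_on _).2 hc⟩

theorem measure_univ_eq_top_of_pairwise_disjoint_smul {G α : Type*} [Group G] [MulAction G α]
    [MeasurableSpace α] [MeasurableConstSMul G α] {μ : Measure α} [SMulInvariantMeasure G α μ]
    {V : Set α} (hV : MeasurableSet V) (hμV : μ V ≠ 0) {c : ℕ → G}
    (hc : Pairwise (Disjoint on fun n ↦ c n • V)) : μ univ = ∞ := by
  refine top_le_iff.1 ?_
  calc ∞ = ∑' n, μ (c n • V) := by simp only [measure_smul, ENNReal.tsum_const_eq_top_of_ne_zero hμV]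
    _ = μ (⋃ n, c n • V) := (measure_iUnion hc fun n ↦ hV.const_smul (c n)).symm
    _ ≤ μ univ := measure_mono (subset_univ _)

theorem compactSpace_of_smulInvariant_measure_quotient {G : Type*} [Group G] [TopologicalSpace G]
    [IsTopologicalGroup G] [WeaklyLocallyCompactSpace G] [SigmaCompactSpace G] {K : Subgroup G}
    (hK : IsCompact (K : Set G)) [MeasurableSpace (G ⧸ K)] [BorelSpace (G ⧸ K)]
    (μ : Measure (G ⧸ K)) [IsFiniteMeasure μ] [NeZero μ] [SMulInvariantMeasure G (G ⧸ K) μ] :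
    CompactSpace G := by
  by_contra hG
  have : NoncompactSpace G := not_compactSpace_iff.1 hG
  have : SigmaCompactSpace (G ⧸ K) :=
    QuotientGroup.mk_surjective.sigmaCompactSpace QuotientGroup.continuous_mk
  obtain ⟨W, hWc, hW1⟩ := exists_compact_mem_nhds (1 : G)
  set V : Set (G ⧸ K) := (↑) '' interior W
  have hVo : IsOpen V := QuotientGroup.isOpenMap_coe _ isOpen_interior
  have hμV : μ V ≠ 0 := (measure_isOpen_pos_of_smulInvariant_of_sigmaCompactSpace G
    (NeZero.ne μ) hVo ⟨_, mem_image_of_mem _ (mem_interior_iff_mem_nhds.2 hW1)⟩).ne'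
  obtain ⟨c, hc⟩ := exists_seq_pairwise_disjoint_smul (hWc.mul hK)
  have hdisj : Pairwise (Disjoint on fun n ↦ c n • V) := fun m n hmn ↦ by
    simp only [onFun, V, ← QuotientGroup.image_mk_smul]
    refine QuotientGroup.disjoint_image_mk ((hc hmn).mono ?_ ?_)
    · exact smul_set_mono (interior_subset.trans (subset_mul_left W K.one_mem))
    · rw [smul_mul_assoc]
      exact smul_set_mono (mul_subset_mul_right interior_subset)
  exact measure_ne_top μ univ
    (measure_univ_eq_top_of_pairwise_disjoint_smul hVo.measurableSet hμV hdisj)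

theorem stmt_11_general {E : Type*} [NormedAddCommGroup E] [NormedSpace ℝ E] [FiniteDimensional ℝ E]
    {G : Type*} [TopologicalSpace G] [ChartedSpace E G] [Group G]
    [LieGroup (modelWithCornersSelf ℝ E) (⊤ : ℕ∞) G] [ConnectedSpace G]
    (K : Subgroup G) (hKcomp : IsCompact (K : Set G))
    [MeasurableSpace (G ⧸ K)] [BorelSpace (G ⧸ K)]
    (μ : Measure (G ⧸ K)) [IsProbabilityMeasure μ]
    (hinv : ∀ g : G, ∀ S : Set (G ⧸ K), MeasurableSet S → μ ((fun p => g • p) '' S) = μ S) :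
    CompactSpace G := by
  have : IsTopologicalGroup G := 
    topologicalGroup_of_lieGroup (modelWithCornersSelf ℝ E) ((⊤ : ℕ∞) : WithTop ℕ∞)
  have : LocallyCompactSpace G := ChartedSpace.locallyCompactSpace E G
  have : SigmaCompactSpace G := IsTopologicalGroup.sigmaCompactSpace_of_connectedSpace G
  have : SMulInvariantMeasure G (G ⧸ K) μ := ⟨fun g S hS ↦ by
    rw [preimage_smul, ← image_smul]
    exact hinv g⁻¹ S hS⟩
  exact compactSpace_of_smulInvariant_measure_quotient hKcomp μ

/-- If a connected finite-dimensional real Lie group `G` has a maximal compact subgroup `K`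
such that `G/K` carries a `G`-invariant Borel probability measure, then `G` is compact. -/
theorem stmt_11 {E : Type*} [NormedAddCommGroup E] [NormedSpace ℝ E] [FiniteDimensional ℝ E]
    {G : Type*} [TopologicalSpace G] [ChartedSpace E G] [Group G]
    [LieGroup (modelWithCornersSelf ℝ E) (⊤ : ℕ∞) G] [ConnectedSpace G]
    (K : Subgroup G) (hKcomp : IsCompact (K : Set G))
    (hKmax : ∀ K' : Subgroup G, IsCompact (K' : Set G) → K ≤ K' → K' = K)
    [MeasurableSpace (G ⧸ K)] [BorelSpace (G ⧸ K)]
    (μ : Measure (G ⧸ K)) [IsProbabilityMeasure μ]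
    (hinv : ∀ g : G, ∀ S : Set (G ⧸ K), MeasurableSet S → μ ((fun p => g • p) '' S) = μ S) :
    CompactSpace G :=
  stmt_11_general (E := E) K hKcomp μ hinv
end

section
/- Let L = SL(2,ℝ) × {0} ⊆ G and set x_n = (I, (n, 0)) ∈ G for n ∈ ℕ. Then the conjugates x_n L x_n⁻¹ converge in the Chabauty sense to the closed subgroup N⁺ ⋉ ℝ² = {((1, s; 0, 1), v) : s ∈ ℝ, v ∈ ℝ²}. In particular, the set of conjugates of L is not closed under Chabauty limits. -/
open Filter Topology

noncomputable section

/-!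
`N⁺ ⋉ ℝ²` is the stabiliser of `e₁ = (1, 0)` for `(g, v) ↦ g e₁`, hence a closed subgroup.
Conjugating `L` by the translation `(I, t e₁)` gives `{(γ, t (e₁ - γ e₁))}`. If such elements
converge while `t → ∞`, then `γ e₁ = e₁ - t⁻¹ · (translation part) → e₁`, so the limit fixes `e₁`.
Conversely `((1,s;0,1), v)` is the limit of the elements whose `γ` has first column `e₁ - v / t`
and upper right entry `s`. No conjugate of `L` is `N⁺ ⋉ ℝ²`: each contains a conjugate of the
central element `(-I, 0)`, whose matrix `-I` moves `e₁`.
-/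

open Matrix

lemma isInducing_coe_SL2 : IsInducing (fun g : SL2 => (g : Matrix (Fin 2) (Fin 2) ℝ)) :=
  ⟨rfl⟩

lemma continuous_fst_mulVec (v : Fin 2 → ℝ) :
    Continuous fun x : GG => (x.1 : Matrix (Fin 2) (Fin 2) ℝ) *ᵥ v :=
  (isInducing_coe_SL2.continuous.comp continuous_fst).matrix_mulVec continuous_const

lemma vec2_eq_smul (t : ℝ) : ![t, 0] = t • ![(1 : ℝ), 0] := by
  simp

lemma mem_NplusR2_iff_mulVec (x : GG) :
    x ∈ NplusR2 ↔ (x.1 : Matrix (Fin 2) (Fin 2) ℝ) *ᵥ ![1, 0] = ![1, 0] := by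
  set g := (x.1 : Matrix (Fin 2) (Fin 2) ℝ)
  constructor
  · rintro ⟨s, hs⟩
    ext i
    fin_cases i <;> simp [g, hs, mulVec, dotProduct]
  · intro h
    have h00 : g 0 0 = 1 := by simpa [mulVec, dotProduct] using congrFun h 0
    have h10 : g 1 0 = 0 := by simpa [mulVec, dotProduct] using congrFun h 1
    have h11 : g 1 1 = 1 := by
      have hdet : g.det = 1 := x.1.prop
      rw [det_fin_two, h00, h10] at hdet
      linarith
    refine ⟨g 0 1, ?_⟩
    ext i j
    fin_cases i <;> fin_cases j <;> simp [g, h00, h10, h11]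

lemma isClosedSubgroup_NplusR2 : IsClosedSubgroup NplusR2 := by
  refine ⟨?_, ?_, ?_, ?_⟩
  · rw [show NplusR2 = {x : GG | (x.1 : Matrix (Fin 2) (Fin 2) ℝ) *ᵥ ![1, 0] = ![1, 0]} from
      Set.ext mem_NplusR2_iff_mulVec]
    exact isClosed_eq (continuous_fst_mulVec _) continuous_const
  · simp [mem_NplusR2_iff_mulVec, gone]
  · intro a ha b hb
    rw [mem_NplusR2_iff_mulVec] at *
    have hmul : ((a.1 * b.1 : SL2) : Matrix (Fin 2) (Fin 2) ℝ) = a.1 * b.1 := rfl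
    simp only [gmul, hmul, ← mulVec_mulVec, hb, ha]
  · intro a ha
    rw [mem_NplusR2_iff_mulVec] at *
    have hinv : ((a.1⁻¹ : SL2) : Matrix (Fin 2) (Fin 2) ℝ) * a.1 = 1 :=
      congrArg Subtype.val (inv_mul_cancel a.1)
    show ((a.1⁻¹ : SL2) : Matrix (Fin 2) (Fin 2) ℝ) *ᵥ ![1, 0] = ![1, 0]
    conv_lhs => rw [← ha, mulVec_mulVec, hinv, one_mulVec]

lemma fst_conj (y h : GG) : (gmul (gmul y h) (ginv y)).1 = y.1 * h.1 * y.1⁻¹ :=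
  rfl

lemma conjSet_Lset_ne_NplusR2 (y : GG) : conjSet y Lset ≠ NplusR2 := by
  intro h
  have hmem : gmul (gmul y (-1, 0)) (ginv y) ∈ NplusR2 := h ▸ ⟨(-1, 0), rfl, rfl⟩
  rw [mem_NplusR2_iff_mulVec, fst_conj] at hmem
  norm_num at hmem

lemma conj_translation (w : Fin 2 → ℝ) (γ : SL2) :
    gmul (gmul ((1 : SL2), w) (γ, 0)) (ginv ((1 : SL2), w)) =
      (γ, w - (γ : Matrix (Fin 2) (Fin 2) ℝ) *ᵥ w) := by
  simp [gmul, ginv, mulVec_neg, sub_eq_add_neg]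

lemma conjSet_translation_Lset (w : Fin 2 → ℝ) :
    conjSet ((1 : SL2), w) Lset = {x | x.2 = w - (x.1 : Matrix (Fin 2) (Fin 2) ℝ) *ᵥ w} := by
  ext x
  constructor
  · rintro ⟨⟨γ, v⟩, rfl : v = 0, rfl⟩
    simp only [Set.mem_ofPred_eq, conj_translation]
  · intro hx
    exact ⟨(x.1, 0), rfl, by simp only [conj_translation]; exact Prod.ext rfl hx.symm⟩

lemma mem_NplusR2_of_tendsto {t : ℕ → ℝ} (ht : Tendsto t atTop atTop) {u : ℕ → GG}
    (hu : ∀ n, u n ∈ conjSet ((1 : SL2), ![t n, 0]) Lset) {x : GG}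
    (hx : Tendsto u atTop (𝓝 x)) : x ∈ NplusR2 := by
  rw [mem_NplusR2_iff_mulVec]
  have hfst : ∀ᶠ n in atTop, ((u n).1 : Matrix (Fin 2) (Fin 2) ℝ) *ᵥ ![1, 0] =
      ![1, 0] - (t n)⁻¹ • (u n).2 := by
    filter_upwards [ht.eventually_ne_atTop 0] with n hn
    have h := hu n
    rw [conjSet_translation_Lset, Set.mem_ofPred_eq, vec2_eq_smul, mulVec_smul] at h
    rw [h, ← smul_sub, smul_smul, inv_mul_cancel₀ hn, one_smul, sub_sub_cancel]
  have hlim : Tendsto (fun n => ![1, 0] - (t n)⁻¹ • (u n).2) atTop (𝓝 ![1, 0]) := by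
    have h := (tendsto_const_nhds (x := (![1, 0] : Fin 2 → ℝ))).sub
      ((tendsto_inv_atTop_zero.comp ht).smul ((continuous_snd.tendsto x).comp hx))
    rwa [zero_smul, sub_zero] at h
  exact tendsto_nhds_unique (((continuous_fst_mulVec _).tendsto x).comp hx)
    (hlim.congr' (hfst.mono fun n hn => hn.symm))

/-- Junk value `1` when `a = 0`, where the matrix does not have determinant one. -/
def sl2OfEntries (a b c : ℝ) : SL2 :=
  if ha : a = 0 then 1
  else ⟨!![a, b; c, (1 + b * c) / a], by rw [det_fin_two_of]; field_simp; ring⟩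

lemma coe_sl2OfEntries {a : ℝ} (ha : a ≠ 0) (b c : ℝ) :
    ((sl2OfEntries a b c : SL2) : Matrix (Fin 2) (Fin 2) ℝ) = !![a, b; c, (1 + b * c) / a] := by
  simp [sl2OfEntries, ha]

lemma sl2OfEntries_one_zero (s : ℝ) : sl2OfEntries 1 s 0 = upperUnipotent s :=
  Subtype.ext (by rw [coe_sl2OfEntries one_ne_zero]; simp [upperUnipotent])

lemma continuousAt_sl2OfEntries {p : ℝ × ℝ × ℝ} (hp : p.1 ≠ 0) :
    ContinuousAt (fun q : ℝ × ℝ × ℝ => sl2OfEntries q.1 q.2.1 q.2.2) p := by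
  rw [isInducing_coe_SL2.continuousAt_iff]
  have heq :
      (fun q : ℝ × ℝ × ℝ => !![q.1, q.2.1; q.2.2, (1 + q.2.1 * q.2.2) / q.1]) =ᶠ[𝓝 p]
      ((fun g : SL2 => (g : Matrix (Fin 2) (Fin 2) ℝ)) ∘
        fun q : ℝ × ℝ × ℝ => sl2OfEntries q.1 q.2.1 q.2.2) := by
    filter_upwards [continuousAt_fst.eventually_ne hp] with q hq
    exact (coe_sl2OfEntries hq _ _).symm
  refine ContinuousAt.congr ?_ heq
  refine continuousAt_pi.2 fun i => continuousAt_pi.2 fun j => ?_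
  fin_cases i <;> fin_cases j <;> simp <;> fun_prop (disch := exact hp)

lemma exists_tendsto_of_mem_NplusR2 {t : ℕ → ℝ} (ht : Tendsto t atTop atTop) {x : GG}
    (hx : x ∈ NplusR2) :
    ∃ u : ℕ → GG, (∀ n, u n ∈ conjSet ((1 : SL2), ![t n, 0]) Lset) ∧
      Tendsto u atTop (𝓝 x) := by
  obtain ⟨g, v⟩ := x
  obtain ⟨s, hs⟩ := hx
  have hg : g = upperUnipotent s := Subtype.ext hs
  set γ : ℕ → SL2 := fun n => sl2OfEntries (1 - v 0 / t n) s (-(v 1 / t n))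
  refine ⟨fun n => (γ n, ![t n, 0] - (γ n : Matrix (Fin 2) (Fin 2) ℝ) *ᵥ ![t n, 0]),
    fun n => by rw [conjSet_translation_Lset]; rfl, ?_⟩
  have ha : Tendsto (fun n => 1 - v 0 / t n) atTop (𝓝 1) := by
    simpa using tendsto_const_nhds.sub (tendsto_const_nhds.div_atTop ht)
  have hc : Tendsto (fun n => -(v 1 / t n)) atTop (𝓝 0) := by
    simpa using (tendsto_const_nhds.div_atTop ht).neg
  have hγ : Tendsto γ atTop (𝓝 g) := by
    rw [hg, ← sl2OfEntries_one_zero]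
    exact (continuousAt_sl2OfEntries one_ne_zero).tendsto.comp
      (ha.prodMk_nhds (tendsto_const_nhds.prodMk_nhds hc))
  refine hγ.prodMk_nhds (tendsto_const_nhds.congr' ?_)
  filter_upwards [ht.eventually_ne_atTop 0, ha.eventually_ne one_ne_zero] with n htn han
  rw [coe_sl2OfEntries han]
  ext i
  fin_cases i <;> simp [mul_sub, mul_div_cancel₀ _ htn]

/-- With `x_n = (I,(n,0))`, the conjugates `x_n L x_n⁻¹` of the Levi subgroup `L` converge in
the Chabauty sense to the closed subgroup `N⁺ ⋉ ℝ²`; in particular the set of conjugates of `L`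
is not closed under Chabauty limits. -/
theorem stmt_12 :
    ChabautyTendsto (fun n => conjSet ((1 : SL2), ![(n : ℝ), 0]) Lset) NplusR2 ∧
      IsClosedSubgroup NplusR2 ∧ ∀ y : GG, conjSet y Lset ≠ NplusR2 :=
  ⟨⟨fun _ hx => exists_tendsto_of_mem_NplusR2 tendsto_natCast_atTop_atTop hx,
      fun _ hk _ hu _ hx =>
        mem_NplusR2_of_tendsto (tendsto_natCast_atTop_atTop.comp hk.tendsto_atTop) hu hx⟩,
    isClosedSubgroup_NplusR2, conjSet_Lset_ne_NplusR2⟩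
end
end

section
/- Let K = {(R_θ, 0) : θ ∈ ℝ} ⊆ G, where R_θ is the rotation matrix (cos θ, sin θ; −sin θ, cos θ), and set g_n = ((1, n; 0, 1), 0) ∈ G for n ∈ ℕ. Then the conjugates g_n K g_n⁻¹ converge in the Chabauty sense to the closed subgroup Ñ⁺ = {(±(1, s; 0, 1), 0) : s ∈ ℝ}. -/
open Filter Topology

noncomputable section

/-!
Conjugating the rotation `R_θ` by `(1,t;0,1)` gives
`(cos θ - t sin θ, (1+t²) sin θ; -sin θ, cos θ + t sin θ)`. If such conjugates converge while
`t → ∞`, the diagonal entries force `t sin θ` to stay bounded, so `sin θ → 0`: the limit is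
upper triangular with equal diagonal entries, which are `±1` by the determinant. Conversely
`±(1,s;0,1)` is the limit obtained by choosing `θ_n` near `0` or `π` with
`sin θ_n = ±s/(1+n²)`, since then `n sin θ_n → 0`.
-/

open Matrix Real

local notation "M2" => Matrix (Fin 2) (Fin 2) ℝ

lemma tendsto_nhds_GG_iff {α : Type*} {l : Filter α} {u : α → GG} {x : GG} :
    Tendsto u l (𝓝 x) ↔
      Tendsto (fun a => ((u a).1 : M2)) l (𝓝 (x.1 : M2)) ∧
        Tendsto (fun a => (u a).2) l (𝓝 x.2) := by
  rw [nhds_prod_eq, tendsto_prod_iff', nhds_induced, tendsto_comap_iff]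
  rfl

lemma tendsto_matrix_fin_two {α : Type*} {l : Filter α} {f g h k : α → ℝ} {a b c d : ℝ}
    (hf : Tendsto f l (𝓝 a)) (hg : Tendsto g l (𝓝 b)) (hh : Tendsto h l (𝓝 c))
    (hk : Tendsto k l (𝓝 d)) :
    Tendsto (fun x => !![f x, g x; h x, k x]) l (𝓝 !![a, b; c, d]) :=
  tendsto_pi_nhds.2 fun i => tendsto_pi_nhds.2 fun j => by
    fin_cases i <;> fin_cases j <;> simpa

lemma sq_apply_zero_zero_eq_one {g : SL2} (h10 : (g : M2) 1 0 = 0)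
    (hdiag : (g : M2) 0 0 = (g : M2) 1 1) : (g : M2) 0 0 ^ 2 = 1 := by
  have hdet := g.2
  rw [det_fin_two, h10, ← hdiag] at hdet
  linear_combination hdet

lemma mem_Ntilde_iff {x : GG} :
    x ∈ Ntilde ↔ (x.1 : M2) 1 0 = 0 ∧ (x.1 : M2) 0 0 = (x.1 : M2) 1 1 ∧ x.2 = 0 := by
  constructor
  · rintro ⟨⟨s, h | h⟩, h2⟩ <;> simp [h, h2]
  · rintro ⟨h10, hdiag, h2⟩
    refine ⟨⟨(x.1 : M2) 0 0 * (x.1 : M2) 0 1, ?_⟩, h2⟩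
    rw [eta_fin_two (x.1 : M2), h10, ← hdiag]
    rcases sq_eq_one_iff.mp (sq_apply_zero_zero_eq_one h10 hdiag) with h | h <;> rw [h]
    · left; simp
    · right; ext i j; fin_cases i <;> fin_cases j <;> simp

lemma isClosedSubgroup_Ntilde : IsClosedSubgroup Ntilde := by
  have entry_continuous (i j : Fin 2) : Continuous fun x : GG => (x.1 : M2) i j :=
    (continuous_induced_dom.matrix_elem i j).comp continuous_fst
  refine ⟨?_, ?_, fun a ha b hb => ?_, fun a ha => ?_⟩
  · simp only [Set.ext fun _ => mem_Ntilde_iff]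
    exact (isClosed_eq (entry_continuous 1 0) continuous_const).inter
      ((isClosed_eq (entry_continuous 0 0) (entry_continuous 1 1)).inter
        (isClosed_eq continuous_snd continuous_const))
  · simp [mem_Ntilde_iff, gone]
  · obtain ⟨ha10, ha11, ha2⟩ := mem_Ntilde_iff.1 ha
    obtain ⟨hb10, hb11, hb2⟩ := mem_Ntilde_iff.1 hb
    simp [mem_Ntilde_iff, gmul, mul_apply, Fin.sum_univ_two, ha10, ha11, ha2, hb10, hb11, hb2]
  · obtain ⟨h10, h11, h2⟩ := mem_Ntilde_iff.1 ha
    simp [mem_Ntilde_iff, ginv, adjugate_fin_two, h10, h11, h2]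

def rotSL (θ : ℝ) : SL2 :=
  ⟨!![cos θ, sin θ; -sin θ, cos θ], by
    simp [det_fin_two_of]; nlinarith [sin_sq_add_cos_sq θ]⟩

def conjRotMatrix (t θ : ℝ) : M2 :=
  !![cos θ - t * sin θ, (1 + t ^ 2) * sin θ; -sin θ, cos θ + t * sin θ]

lemma conj_rotSL (t θ : ℝ) :
    gmul (gmul (upperUnipotent t, 0) (rotSL θ, 0)) (ginv (upperUnipotent t, 0)) =
      (upperUnipotent t * rotSL θ * (upperUnipotent t)⁻¹, 0) := by
  simp [gmul, ginv, mul_assoc]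

lemma coe_upperUnipotent_mul_rotSL_mul_inv (t θ : ℝ) :
    ((upperUnipotent t * rotSL θ * (upperUnipotent t)⁻¹ : SL2) : M2) = conjRotMatrix t θ := by
  rw [Matrix.SpecialLinearGroup.coe_mul, Matrix.SpecialLinearGroup.coe_mul,
    Matrix.SpecialLinearGroup.coe_inv]
  simp only [upperUnipotent, rotSL, conjRotMatrix, adjugate_fin_two_of, mul_fin_two]
  ext i j; fin_cases i <;> fin_cases j <;> simp <;> ring

lemma mem_conjSet_Kset_iff {t : ℝ} {x : GG} :
    x ∈ conjSet (upperUnipotent t, 0) Kset ↔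
      ∃ θ, x = (upperUnipotent t * rotSL θ * (upperUnipotent t)⁻¹, 0) := by
  constructor
  · rintro ⟨y, ⟨θ, h1, h2⟩, rfl⟩
    obtain rfl : y = (rotSL θ, 0) := Prod.ext (Subtype.ext h1) h2
    exact ⟨θ, conj_rotSL t θ⟩
  · rintro ⟨θ, rfl⟩
    exact ⟨(rotSL θ, 0), ⟨θ, rfl, rfl⟩, conj_rotSL t θ⟩

section Limits

variable {α : Type*} {l : Filter α} {t : α → ℝ}

lemma tendsto_inv_one_add_sq (ht : Tendsto t l atTop) :
    Tendsto (fun i => (1 + t i ^ 2)⁻¹) l (𝓝 0) :=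
  (tendsto_atTop_add_const_left l 1 ((tendsto_pow_atTop two_ne_zero).comp ht)).inv_tendsto_atTop

lemma tendsto_div_one_add_sq (ht : Tendsto t l atTop) :
    Tendsto (fun i => t i / (1 + t i ^ 2)) l (𝓝 0) := by
  refine tendsto_of_tendsto_of_tendsto_of_le_of_le' tendsto_const_nhds
    (tendsto_inv_atTop_zero.comp ht) ?_ ?_
  · filter_upwards [ht.eventually_ge_atTop 0] with i hi
    positivity
  · filter_upwards [ht.eventually_gt_atTop 0] with i hi
    rw [Function.comp_apply, div_le_iff₀ (by positivity)]
    field_simp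
    nlinarith

lemma tendsto_conjRotMatrix {θ : α → ℝ} {a b : ℝ} (ht : Tendsto t l atTop)
    (hcos : Tendsto (fun i => cos (θ i)) l (𝓝 a))
    (hsin : Tendsto (fun i => (1 + t i ^ 2) * sin (θ i)) l (𝓝 b)) :
    Tendsto (fun i => conjRotMatrix (t i) (θ i)) l (𝓝 !![a, b; 0, a]) := by
  have hpos (i : α) : 1 + t i ^ 2 ≠ 0 := by positivity
  have h_sin : Tendsto (fun i => sin (θ i)) l (𝓝 0) := by
    simpa [← mul_assoc, inv_mul_cancel₀ (hpos _)] using (tendsto_inv_one_add_sq ht).mul hsin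
  have h_mul_sin : Tendsto (fun i => t i * sin (θ i)) l (𝓝 0) := by
    simpa [div_mul_eq_mul_div, mul_div_assoc, mul_div_cancel_left₀ _ (hpos _)] using
      (tendsto_div_one_add_sq ht).mul hsin
  simpa [conjRotMatrix] using
    tendsto_matrix_fin_two (hcos.sub h_mul_sin) hsin h_sin.neg (hcos.add h_mul_sin)

lemma exists_tendsto_cos_and_tendsto_mul_sin (ht : Tendsto t l atTop) {a : ℝ} (ha : a ^ 2 = 1)
    (b : ℝ) : ∃ θ : α → ℝ, Tendsto (fun i => cos (θ i)) l (𝓝 a) ∧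
      Tendsto (fun i => (1 + t i ^ 2) * sin (θ i)) l (𝓝 b) := by
  set σ := fun i => a * b * (1 + t i ^ 2)⁻¹
  have hσ : Tendsto σ l (𝓝 0) := by simpa using (tendsto_inv_one_add_sq ht).const_mul (a * b)
  have hcos_arccos : cos (arccos a) = a := cos_arccos (by nlinarith) (by nlinarith)
  have hsin_arccos : sin (arccos a) = 0 := by simp [sin_arccos, ha]
  refine ⟨fun i => arccos a + arcsin (σ i), ?_, ?_⟩
  · have h := ((continuous_cos.comp continuous_arcsin).tendsto 0).comp hσ
    simpa [cos_add, hcos_arccos, hsin_arccos] using h.const_mul a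
  · refine tendsto_const_nhds.congr' ?_
    filter_upwards [hσ.eventually (Icc_mem_nhds neg_one_lt_zero one_pos)] with i hi
    rw [sin_add, hcos_arccos, hsin_arccos, sin_arcsin hi.1 hi.2]
    simp only [σ, zero_mul, zero_add]
    field_simp
    linear_combination -b * ha

lemma conjRotMatrix_limit [l.NeBot] {θ : α → ℝ} {M : M2} (ht : Tendsto t l atTop)
    (hM : M.det = 1) (h : Tendsto (fun i => conjRotMatrix (t i) (θ i)) l (𝓝 M)) :
    M 1 0 = 0 ∧ M 0 0 = M 1 1 := by
  have entry (i j : Fin 2) : Tendsto (fun x => conjRotMatrix (t x) (θ x) i j) l (𝓝 (M i j)) :=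
    ((continuous_id.matrix_elem i j).tendsto M).comp h
  have h_cos : Tendsto (fun i => cos (θ i)) l (𝓝 ((M 0 0 + M 1 1) / 2)) :=
    (((entry 0 0).add (entry 1 1)).div_const 2).congr fun i => by simp [conjRotMatrix]
  have h_mul_sin : Tendsto (fun i => t i * sin (θ i)) l (𝓝 ((M 1 1 - M 0 0) / 2)) :=
    (((entry 1 1).sub (entry 0 0)).div_const 2).congr fun i => by simp [conjRotMatrix]
  have h_sin : Tendsto (fun i => sin (θ i)) l (𝓝 0) := by
    have h_inv_mul := (tendsto_inv_atTop_zero.comp ht).mul h_mul_sin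
    rw [zero_mul] at h_inv_mul
    refine h_inv_mul.congr' ?_
    filter_upwards [ht.eventually_ne_atTop 0] with i hi
    exact inv_mul_cancel_left₀ hi _
  have h10 : M 1 0 = 0 :=
    tendsto_nhds_unique (entry 1 0) (by simpa [conjRotMatrix] using h_sin.neg)
  have h_trace : ((M 0 0 + M 1 1) / 2) ^ 2 + 0 ^ 2 = 1 :=
    tendsto_nhds_unique ((h_cos.pow 2).add (h_sin.pow 2))
      (tendsto_const_nhds.congr fun i => (cos_sq_add_sin_sq _).symm)
  rw [det_fin_two, h10] at hM
  exact ⟨h10, by nlinarith⟩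

end Limits

/-- With `g_n = ((1,n;0,1), 0)`, the conjugates `g_n K g_n⁻¹` converge in the Chabauty sense to
the closed subgroup `Ñ⁺`. -/
theorem stmt_13 :
    ChabautyTendsto (fun n => conjSet (upperUnipotent (n : ℝ), 0) Kset) Ntilde ∧
      IsClosedSubgroup Ntilde := by
  have h_nat : Tendsto (fun n : ℕ => (n : ℝ)) atTop atTop := tendsto_natCast_atTop_atTop
  refine ⟨⟨fun x hx => ?_, fun k hk u hu x hx => ?_⟩, isClosedSubgroup_Ntilde⟩
  · obtain ⟨h10, hdiag, h2⟩ := mem_Ntilde_iff.1 hx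
    obtain ⟨θ, hcos, hsin⟩ := exists_tendsto_cos_and_tendsto_mul_sin h_nat
      (sq_apply_zero_zero_eq_one h10 hdiag) ((x.1 : M2) 0 1)
    refine ⟨fun n => (upperUnipotent n * rotSL (θ n) * (upperUnipotent n)⁻¹, 0),
      fun n => mem_conjSet_Kset_iff.2 ⟨θ n, rfl⟩, tendsto_nhds_GG_iff.2 ⟨?_, ?_⟩⟩
    · simp only [coe_upperUnipotent_mul_rotSL_mul_inv]
      convert tendsto_conjRotMatrix h_nat hcos hsin
      exact (eta_fin_two _).trans (by rw [h10, hdiag])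
    · rw [h2]
      exact tendsto_const_nhds
  · choose θ hθ using fun n => mem_conjSet_Kset_iff.1 (hu n)
    obtain ⟨hx1, hx2⟩ := tendsto_nhds_GG_iff.1 hx
    simp only [hθ, coe_upperUnipotent_mul_rotSL_mul_inv] at hx1 hx2
    obtain ⟨h10, hdiag⟩ := conjRotMatrix_limit (h_nat.comp hk.tendsto_atTop) x.1.2 hx1
    exact mem_Ntilde_iff.2 ⟨h10, hdiag, tendsto_nhds_unique tendsto_const_nhds hx2 |>.symm⟩
end
end

section
/- Let A = {(diag(a, 1/a), 0) : a > 0} ⊆ G and set x_n = (I, (n, 0)) ∈ G for n ∈ ℕ. Then the conjugates x_n A x_n⁻¹ converge in the Chabauty sense to the closed subgroup V₀ = {(I, (t, 0)) : t ∈ ℝ}. -/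
open Filter Topology

noncomputable section

/-!
Conjugating `(diag(a, a⁻¹), 0)` by the translation `(I, (c, 0))` gives
`(diag(a, a⁻¹), ((1 - a) c, 0))`. Along `c → ∞`, such elements converge only if `(1 - a) c`
stays bounded, which forces `a → 1`, so every limit lies in `V₀`; conversely `(I, (t, 0))` is
the limit of the elements with `a = 1 - t / c`.
-/

def diagSL2 (a : ℝ) (ha : a ≠ 0) : SL2 :=
  ⟨!![a, 0; 0, a⁻¹], by simp [Matrix.det_fin_two_of, ha]⟩

@[simp]
lemma coe_diagSL2 (a : ℝ) (ha : a ≠ 0) :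
    (diagSL2 a ha : Matrix (Fin 2) (Fin 2) ℝ) = !![a, 0; 0, a⁻¹] := rfl

lemma isEmbedding_coe_SL2 :
    Topology.IsEmbedding (fun g : SL2 => (g : Matrix (Fin 2) (Fin 2) ℝ)) :=
  ⟨⟨rfl⟩, Subtype.val_injective⟩

instance : T2Space SL2 := isEmbedding_coe_SL2.t2Space

lemma tendsto_diagSL2 {ι : Type*} {l : Filter ι} {a : ι → ℝ} (ha : ∀ i, a i ≠ 0)
    (h : Tendsto a l (𝓝 1)) : Tendsto (fun i => diagSL2 (a i) (ha i)) l (𝓝 1) := by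
  rw [isEmbedding_coe_SL2.tendsto_nhds_iff]
  have hinv : Tendsto (fun i => (a i)⁻¹) l (𝓝 1) := by simpa using h.inv₀ one_ne_zero
  simp only [Function.comp_def, coe_diagSL2, Matrix.SpecialLinearGroup.coe_one, Matrix.one_fin_two]
  refine tendsto_pi_nhds.2 fun i => tendsto_pi_nhds.2 fun j => ?_
  fin_cases i <;> fin_cases j <;> simp [h, hinv, tendsto_const_nhds]

lemma conj_translation_diagSL2 (c a : ℝ) (ha : a ≠ 0) :
    gmul (gmul ((1 : SL2), ![c, 0]) (diagSL2 a ha, 0)) (ginv ((1 : SL2), ![c, 0])) =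
      (diagSL2 a ha, ![(1 - a) * c, 0]) := by
  simp only [gmul, ginv, inv_one, Matrix.SpecialLinearGroup.coe_one, Matrix.one_mulVec,
    one_mul, mul_one, add_zero]
  refine Prod.ext rfl (funext fun i => ?_)
  fin_cases i <;> simp; ring

lemma mem_conjSet_Aset_iff (c : ℝ) (x : GG) :
    x ∈ conjSet ((1 : SL2), ![c, 0]) Aset ↔
      ∃ a, ∃ ha : 0 < a, x = (diagSL2 a ha.ne', ![(1 - a) * c, 0]) := by
  constructor
  · rintro ⟨y, ⟨a, ha, hy₁, hy₂⟩, rfl⟩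
    obtain rfl : y = (diagSL2 a ha.ne', 0) := Prod.ext (Subtype.ext hy₁) hy₂
    exact ⟨a, ha, conj_translation_diagSL2 ..⟩
  · rintro ⟨a, ha, rfl⟩
    exact ⟨(diagSL2 a ha.ne', 0), ⟨a, ha, rfl, rfl⟩, conj_translation_diagSL2 ..⟩

lemma mem_V0_iff (x : GG) : x ∈ V0 ↔ x.1 = 1 ∧ x.2 1 = 0 := by
  refine ⟨fun ⟨t, h₁, h₂⟩ => ⟨h₁, by simp [h₂]⟩, fun ⟨h₁, h₂⟩ => ⟨x.2 0, h₁, ?_⟩⟩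
  ext i
  fin_cases i <;> simp [h₂]

lemma isClosedSubgroup_V0 : IsClosedSubgroup V0 := by
  refine ⟨?_, (mem_V0_iff _).2 ⟨rfl, rfl⟩, ?_, ?_⟩
  · rw [show V0 = {x : GG | x.1 = 1} ∩ {x | x.2 1 = 0} from Set.ext mem_V0_iff]
    exact (isClosed_eq continuous_fst continuous_const).inter
      (isClosed_eq (by fun_prop : Continuous fun x : GG => x.2 1) continuous_const)
  · simp only [mem_V0_iff]
    rintro a ⟨ha₁, ha₂⟩ b ⟨hb₁, hb₂⟩
    simp [gmul, ha₁, hb₁, ha₂, hb₂]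
  · simp only [mem_V0_iff]
    rintro a ⟨ha₁, ha₂⟩
    simp [ginv, ha₁, ha₂]

lemma exists_mem_conjSet_Aset_tendsto {ι : Type*} {l : Filter ι} {c : ι → ℝ}
    (hc : Tendsto c l atTop) {h : GG} (hh : h ∈ V0) :
    ∃ u : ι → GG, (∀ i, u i ∈ conjSet ((1 : SL2), ![c i, 0]) Aset) ∧ Tendsto u l (𝓝 h) := by
  obtain ⟨t, h₁, h₂⟩ := hh
  obtain rfl : h = ((1 : SL2), ![t, 0]) := Prod.ext h₁ h₂
  -- `a i = 1 - t / c i` once that is positive; the value `1` elsewhere only keeps `a i > 0`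
  set a : ι → ℝ := fun i => if 0 < 1 - t / c i then 1 - t / c i else 1
  have ha : ∀ i, 0 < a i := fun i => by
    dsimp only [a]
    split_ifs with hi
    exacts [hi, one_pos]
  have hlim : Tendsto (fun i => 1 - t / c i) l (𝓝 1) := by
    simpa using tendsto_const_nhds.sub (tendsto_const_nhds.div_atTop hc)
  have heq : ∀ᶠ i in l, a i = 1 - t / c i ∧ 0 < c i := by
    filter_upwards [hlim.eventually (lt_mem_nhds one_pos), hc.eventually_gt_atTop 0] with i hi hci
    exact ⟨if_pos hi, hci⟩
  refine ⟨fun i => (diagSL2 (a i) (ha i).ne', ![(1 - a i) * c i, 0]),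
    fun i => (mem_conjSet_Aset_iff _ _).2 ⟨a i, ha i, rfl⟩, ?_⟩
  refine (tendsto_diagSL2 (fun i => (ha i).ne') (hlim.congr' ?_)).prodMk_nhds
    (tendsto_const_nhds.congr' ?_)
  · filter_upwards [heq] with i hi using hi.1.symm
  · filter_upwards [heq] with i ⟨hai, hci⟩
    simp [hai, hci.ne']

lemma mem_V0_of_mem_conjSet_Aset_tendsto {ι : Type*} {l : Filter ι} [l.NeBot] {c : ι → ℝ}
    (hc : Tendsto c l atTop) {u : ι → GG} (hu : ∀ i, u i ∈ conjSet ((1 : SL2), ![c i, 0]) Aset)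
    {x : GG} (hx : Tendsto u l (𝓝 x)) : x ∈ V0 := by
  choose a ha hua using fun i => (mem_conjSet_Aset_iff _ _).1 (hu i)
  obtain rfl : u = fun i => (diagSL2 (a i) (ha i).ne', ![(1 - a i) * c i, 0]) := funext hua
  have hvec : Tendsto (fun i => (1 - a i) * c i) l (𝓝 (x.2 0)) := by
    simpa [Function.comp_def] using ((continuous_apply 0).tendsto _).comp hx.snd_nhds
  have ha₁ : Tendsto a l (𝓝 1) := by
    have h : Tendsto (fun i => 1 - (1 - a i) * c i / c i) l (𝓝 1) := by
      simpa using tendsto_const_nhds.sub (hvec.div_atTop hc)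
    refine h.congr' ?_
    filter_upwards [hc.eventually_gt_atTop 0] with i hci
    simp [hci.ne']
  refine (mem_V0_iff x).2
    ⟨tendsto_nhds_unique hx.fst_nhds (tendsto_diagSL2 (fun i => (ha i).ne') ha₁), ?_⟩
  exact tendsto_nhds_unique (((continuous_apply 1).tendsto _).comp hx.snd_nhds)
    (by simp [Function.comp_def])

/-- With `x_n = (I,(n,0))`, the conjugates `x_n A x_n⁻¹` converge in the Chabauty sense to
the closed subgroup `V₀`. -/
theorem stmt_15 :
    ChabautyTendsto (fun n => conjSet ((1 : SL2), ![(n : ℝ), 0]) Aset) V0 ∧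
      IsClosedSubgroup V0 := by
  refine ⟨⟨fun h hh => exists_mem_conjSet_Aset_tendsto tendsto_natCast_atTop_atTop hh,
    fun k hk u hu x hx => mem_V0_of_mem_conjSet_Aset_tendsto
      (tendsto_natCast_atTop_atTop.comp hk.tendsto_atTop) hu hx⟩, isClosedSubgroup_V0⟩

end
end

section
/- Let A = {(diag(a, 1/a), 0) : a > 0} ⊆ G and set x_n = (I, (0, n)) ∈ G for n ∈ ℕ. Then the conjugates x_n A x_n⁻¹ converge in the Chabauty sense to the closed subgroup V_∞ = {(I, (0, t)) : t ∈ ℝ}. -/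
open Filter Topology

noncomputable section

/-!
Conjugating `(diag(a, a⁻¹), 0)` by the translation `(I, (0, c))` gives
`(diag(a, a⁻¹), (0, c (1 - a⁻¹)))`. A point `(I, (0, t))` of `V_∞` is reached by choosing
`a_n → 1` with `n (1 - a_n⁻¹) → t`. Conversely, if such conjugates converge along `c → ∞`, the
second coordinate `c (1 - a⁻¹)` stays bounded, which forces `a → 1`, so the limit is of the form
`(I, (0, s))`.
-/

open Matrix

lemma tendsto_nhds_zero_of_tendsto_mul {ι : Type*} {l : Filter ι} {c e : ι → ℝ} {s : ℝ}
    (hc : Tendsto c l atTop) (h : Tendsto (fun i => c i * e i) l (𝓝 s)) :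
    Tendsto e l (𝓝 0) := by
  refine (h.div_atTop hc).congr' ?_
  filter_upwards [hc.eventually_gt_atTop 0] with i hi
  field_simp

def toMatrixProd (x : GG) : Matrix (Fin 2) (Fin 2) ℝ × (Fin 2 → ℝ) :=
  ((x.1 : Matrix (Fin 2) (Fin 2) ℝ), x.2)

lemma isEmbedding_toMatrixProd : IsEmbedding toMatrixProd :=
  (IsEmbedding.mk ⟨rfl⟩ Subtype.val_injective).prodMap IsEmbedding.id

def diagSL (a : ℝ) (ha : a ≠ 0) : SL2 :=
  ⟨!![a, 0; 0, a⁻¹], by simp [det_fin_two_of, ha]⟩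

lemma diagSL_mem_Aset {a : ℝ} (ha : 0 < a) : (diagSL a ha.ne', 0) ∈ Aset :=
  ⟨a, ha, rfl, rfl⟩

lemma exists_eq_diagSL_of_mem_Aset {y : GG} (hy : y ∈ Aset) :
    ∃ a, ∃ ha : 0 < a, y = (diagSL a ha.ne', 0) := by
  obtain ⟨a, ha, h1, h2⟩ := hy
  exact ⟨a, ha, Prod.ext (Subtype.ext h1) h2⟩

lemma gmul_gmul_ginv_translation (v : Fin 2 → ℝ) (g : SL2) :
    gmul (gmul ((1 : SL2), v) (g, 0)) (ginv ((1 : SL2), v)) =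
      (g, v - (g : Matrix (Fin 2) (Fin 2) ℝ) *ᵥ v) := by
  simp only [gmul, ginv, inv_one, one_mul, mul_one, mulVec_zero, add_zero, mulVec_neg,
    sub_eq_add_neg]
  congr
  exact one_mulVec v

/-- `toMatrixProd (diag(a, a⁻¹), (0, s))`, defined for every `a`. -/
def diagVert (a s : ℝ) : Matrix (Fin 2) (Fin 2) ℝ × (Fin 2 → ℝ) :=
  (!![a, 0; 0, a⁻¹], ![0, s])

lemma continuousAt_diagVert {a s : ℝ} (ha : a ≠ 0) :
    ContinuousAt (fun p : ℝ × ℝ => diagVert p.1 p.2) (a, s) := by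
  have hinv : ContinuousAt (fun p : ℝ × ℝ => p.1⁻¹) (a, s) :=
    continuousAt_fst.inv₀ ha
  refine ContinuousAt.prodMk ?_ ?_
  · refine continuousAt_pi.2 fun i => continuousAt_pi.2 fun j => ?_
    fin_cases i <;> fin_cases j
    exacts [continuousAt_fst, continuousAt_const, continuousAt_const, hinv]
  · refine continuousAt_pi.2 fun i => ?_
    fin_cases i
    exacts [continuousAt_const, continuousAt_snd]

lemma tendsto_diagVert_one {ι : Type*} {l : Filter ι} {a s : ι → ℝ} {t : ℝ}
    (ha : Tendsto a l (𝓝 1)) (hs : Tendsto s l (𝓝 t)) :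
    Tendsto (fun i => diagVert (a i) (s i)) l (𝓝 (toMatrixProd ((1 : SL2), ![0, t]))) := by
  have hone : diagVert 1 t = toMatrixProd ((1 : SL2), ![0, t]) := by
    simp [diagVert, toMatrixProd, one_fin_two]
  rw [← hone]
  exact (continuousAt_diagVert one_ne_zero).tendsto.comp (ha.prodMk_nhds hs)

lemma toMatrixProd_conj_diagSL (c : ℝ) {a : ℝ} (ha : 0 < a) :
    toMatrixProd (gmul (gmul ((1 : SL2), ![0, c]) (diagSL a ha.ne', 0))
      (ginv ((1 : SL2), ![0, c]))) = diagVert a (c * (1 - a⁻¹)) := by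
  rw [gmul_gmul_ginv_translation]
  refine Prod.ext rfl ?_
  change ![0, c] - !![a, 0; 0, a⁻¹] *ᵥ ![0, c] = ![0, c * (1 - a⁻¹)]
  ext i
  fin_cases i <;> simp
  ring

lemma exists_diagVert_of_mem_conjSet_Aset {c : ℝ} {y : GG}
    (hy : y ∈ conjSet ((1 : SL2), ![0, c]) Aset) :
    ∃ a, 0 < a ∧ toMatrixProd y = diagVert a (c * (1 - a⁻¹)) := by
  obtain ⟨_, hA, rfl⟩ := hy
  obtain ⟨a, ha, rfl⟩ := exists_eq_diagSL_of_mem_Aset hA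
  exact ⟨a, ha, toMatrixProd_conj_diagSL c ha⟩

lemma Vinf_eq : Vinf = Set.range fun t : ℝ => ((1 : SL2), ![0, t]) := by
  ext x
  constructor
  · rintro ⟨t, h1, h2⟩
    exact ⟨t, Prod.ext h1.symm h2.symm⟩
  · rintro ⟨t, rfl⟩
    exact ⟨t, rfl, rfl⟩

lemma mem_Vinf_iff {x : GG} :
    x ∈ Vinf ↔ (x.1 : Matrix (Fin 2) (Fin 2) ℝ) = 1 ∧ x.2 0 = 0 := by
  constructor
  · rintro ⟨t, h1, h2⟩
    simp [h1, h2]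
  · rintro ⟨h1, h2⟩
    refine ⟨x.2 1, Subtype.ext h1, funext fun i => ?_⟩
    fin_cases i <;> simp [h2]

lemma gmul_translation (v w : Fin 2 → ℝ) :
    gmul ((1 : SL2), v) ((1 : SL2), w) = ((1 : SL2), v + w) := by
  simp only [gmul, mul_one]
  congr
  exact one_mulVec w

lemma ginv_translation (v : Fin 2 → ℝ) : ginv ((1 : SL2), v) = ((1 : SL2), -v) := by
  simp only [ginv, inv_one]
  congr
  exact one_mulVec v

lemma isClosedSubgroup_Vinf : IsClosedSubgroup Vinf := by
  refine ⟨?_, ?_, ?_, ?_⟩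
  · have hVinf : Vinf = {x : GG | (x.1 : Matrix (Fin 2) (Fin 2) ℝ) = 1} ∩ {x | x.2 0 = 0} :=
      Set.ext fun _ => mem_Vinf_iff
    rw [hVinf]
    exact (isClosed_eq (continuous_induced_dom.comp continuous_fst) continuous_const).inter
      (isClosed_eq ((continuous_apply 0).comp continuous_snd) continuous_const)
  · exact ⟨0, rfl, by ext i; fin_cases i <;> rfl⟩
  · rw [Vinf_eq]
    rintro _ ⟨s, rfl⟩ _ ⟨t, rfl⟩
    exact ⟨s + t, by simp [gmul_translation]⟩
  · rw [Vinf_eq]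
    rintro _ ⟨s, rfl⟩
    exact ⟨-s, by simp [ginv_translation]⟩

lemma exists_seq_mem_conjSet_Aset_tendsto (t : ℝ) :
    ∃ u : ℕ → GG, (∀ n : ℕ, u n ∈ conjSet ((1 : SL2), ![0, (n : ℝ)]) Aset) ∧
      Tendsto u atTop (𝓝 ((1 : SL2), ![0, t])) := by
  -- `a_n = b_n⁻¹` with `n (1 - b_n) = t · n / (n + c)`; `c > |t|` keeps every `b_n` positive.
  set c := |t| + 1
  set b : ℕ → ℝ := fun n => 1 - t / (n + c)
  have hb : ∀ n, 0 < (b n)⁻¹ := fun n => by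
    rw [inv_pos, sub_pos, div_lt_one (by positivity)]
    linarith [le_abs_self t, (n.cast_nonneg : (0 : ℝ) ≤ n)]
  refine ⟨fun n => gmul (gmul ((1 : SL2), ![0, (n : ℝ)]) (diagSL (b n)⁻¹ (hb n).ne', 0))
    (ginv ((1 : SL2), ![0, (n : ℝ)])),
    fun n => Set.mem_image_of_mem _ (diagSL_mem_Aset (hb n)), ?_⟩
  rw [isEmbedding_toMatrixProd.tendsto_nhds_iff]
  have hb1 : Tendsto b atTop (𝓝 1) := by
    simpa using (tendsto_const_nhds (x := (1 : ℝ))).sub (tendsto_const_nhds.div_atTop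
      (tendsto_natCast_atTop_atTop.atTop_add tendsto_const_nhds))
  have hs : Tendsto (fun n : ℕ => (n : ℝ) * (1 - (b n)⁻¹⁻¹)) atTop (𝓝 t) := by
    have hlim := (tendsto_natCast_div_add_atTop c).const_mul t
    rw [mul_one] at hlim
    refine hlim.congr fun n => ?_
    simp only [b, inv_inv]
    ring
  exact (tendsto_diagVert_one (by simpa using hb1.inv₀ one_ne_zero) hs).congr
    fun n => (toMatrixProd_conj_diagSL _ (hb n)).symm

lemma mem_Vinf_of_tendsto_conjSet_Aset {ι : Type*} {l : Filter ι} [l.NeBot] {c : ι → ℝ}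
    (hc : Tendsto c l atTop) {u : ι → GG}
    (hu : ∀ i, u i ∈ conjSet ((1 : SL2), ![0, c i]) Aset)
    {x : GG} (hx : Tendsto u l (𝓝 x)) : x ∈ Vinf := by
  choose a ha hua using fun i => exists_diagVert_of_mem_conjSet_Aset (hu i)
  rw [isEmbedding_toMatrixProd.tendsto_nhds_iff] at hx
  set s := x.2 1
  have hs : Tendsto (fun i => c i * (1 - (a i)⁻¹)) l (𝓝 s) := by
    refine (((continuous_apply 1).comp continuous_snd).tendsto _ |>.comp hx).congr fun i => ?_
    simp [hua i, diagVert]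
  have ha1 : Tendsto a l (𝓝 1) := by
    have hinv : Tendsto (fun i => (a i)⁻¹) l (𝓝 1) := by
      simpa using (tendsto_const_nhds (x := (1 : ℝ))).sub (tendsto_nhds_zero_of_tendsto_mul hc hs)
    simpa using hinv.inv₀ one_ne_zero
  have hxs : toMatrixProd x = toMatrixProd ((1 : SL2), ![0, s]) :=
    tendsto_nhds_unique hx ((tendsto_diagVert_one ha1 hs).congr fun i => (hua i).symm)
  rw [isEmbedding_toMatrixProd.injective hxs]
  exact ⟨s, rfl, rfl⟩

/-- With `x_n = (I,(0,n))`, the conjugates `x_n A x_n⁻¹` converge in the Chabauty sense to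
the closed subgroup `V_∞`. -/
theorem stmt_16 :
    ChabautyTendsto (fun n => conjSet ((1 : SL2), ![0, (n : ℝ)]) Aset) Vinf ∧
      IsClosedSubgroup Vinf := by
  refine ⟨⟨?_, fun k hk u hu x hx => ?_⟩, isClosedSubgroup_Vinf⟩
  · rw [Vinf_eq]
    rintro _ ⟨t, rfl⟩
    exact exists_seq_mem_conjSet_Aset_tendsto t
  · exact mem_Vinf_of_tendsto_conjSet_Aset
      (tendsto_natCast_atTop_atTop.comp hk.tendsto_atTop) hu hx

end
end
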